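/- arXiv:1604.01287 — 6 statements merged into one kernel-verified Lean document; each statement's English description precedes it below -/
import Mathlib

section
/- If a continuous function f : I → I on a real interval I satisfies aₙ fⁿ(x) + ... + a₁ f(x) + a₀ x = 0 for all x ∈ I with a₀ ≠ 0, then f is strictly monotone (strictly increasing or strictly decreasing). -/
open Set

/-- Continuous injective on an order-connected set of reals implies strictly monotone. -/
lemma aux_mono {I : Set ℝ} (hI : I.OrdConnected) {f : ℝ → ℝ}
    (hc : ContinuousOn f I) (hi : Set.InjOn f I) :
    StrictMonoOn f I ∨ StrictAntiOn f I := by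
  by_cases hs : ∃ a ∈ I, ∃ b ∈ I, a < b
  · obtain ⟨a, ha, b, hb, hab⟩ := hs
    have hIcc : Set.Icc a b ⊆ I := hI.out ha hb
    have key : ∀ x ∈ I, ∀ y ∈ I, x < y →
        (StrictMonoOn f (Set.Icc (min a x) (max b y)) ∨
          StrictAntiOn f (Set.Icc (min a x) (max b y))) ∧
        Set.Icc a b ⊆ Set.Icc (min a x) (max b y) ∧
        x ∈ Set.Icc (min a x) (max b y) ∧ y ∈ Set.Icc (min a x) (max b y) := by
      intro x hx y hy hxy
      have hmin : min a x ∈ I := by rcases min_choice a x with h | h <;> rw [h] <;> assumption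
      have hmax : max b y ∈ I := by rcases max_choice b y with h | h <;> rw [h] <;> assumption
      have hsub : Set.Icc (min a x) (max b y) ⊆ I := hI.out hmin hmax
      have hle : min a x ≤ max b y :=
        le_trans (min_le_left a x) (le_trans hab.le (le_max_left b y))
      refine ⟨(hc.mono hsub).strictMonoOn_of_injOn_Icc' hle (hi.mono hsub),
        Set.Icc_subset_Icc (min_le_left a x) (le_max_left b y),
        ⟨min_le_right a x, le_trans hxy.le (le_max_right b y)⟩,
        ⟨le_trans (min_le_right a x) hxy.le, le_max_right b y⟩⟩
    have hamem : a ∈ Set.Icc a b := ⟨le_refl _, hab.le⟩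
    have hbmem : b ∈ Set.Icc a b := ⟨hab.le, le_refl _⟩
    rcases (hc.mono hIcc).strictMonoOn_of_injOn_Icc' hab.le (hi.mono hIcc) with h | h
    · left
      intro x hx y hy hxy
      obtain ⟨hmo, hsub, hxm, hym⟩ := key x hx y hy hxy
      rcases hmo with h' | h'
      · exact h' hxm hym hxy
      · exact absurd (h' (hsub hamem) (hsub hbmem) hab) (not_lt.2 (h hamem hbmem hab).le)
    · right
      intro x hx y hy hxy
      obtain ⟨hmo, hsub, hxm, hym⟩ := key x hx y hy hxy
      rcases hmo with h' | h'
      · exact absurd (h' (hsub hamem) (hsub hbmem) hab) (not_lt.2 (h hamem hbmem hab).le)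
      · exact h' hxm hym hxy
  · push_neg at hs
    left
    intro x hx y hy hxy
    exact absurd hxy (not_lt.2 (hs x hx y hy))

/-- A continuous solution on an interval of a polynomial-like iterative equation
with `a 0 ≠ 0` is strictly monotone on the interval. -/
theorem stmt1 (I : Set ℝ) (hI : I.OrdConnected) (n : ℕ) (hn : 0 < n)
    (a : ℕ → ℝ) (ha0 : a 0 ≠ 0) (f : ℝ → ℝ)
    (hmap : Set.MapsTo f I I) (hcont : ContinuousOn f I)
    (heq : ∀ x ∈ I, ∑ k ∈ Finset.range (n + 1), a k * f^[k] x = 0) :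
    StrictMonoOn f I ∨ StrictAntiOn f I := by
  have hinj : Set.InjOn f I := by
    intro x hx y hy hfxy
    have hiter : ∀ k : ℕ, 0 < k → f^[k] x = f^[k] y := by
      intro k hk
      obtain ⟨m, rfl⟩ := Nat.exists_eq_succ_of_ne_zero hk.ne'
      simp [Function.iterate_succ_apply, hfxy]
    have hx0 := heq x hx
    have hy0 := heq y hy
    rw [Finset.sum_range_succ'] at hx0 hy0
    have hsum : ∑ k ∈ Finset.range n, a (k + 1) * f^[k + 1] x
        = ∑ k ∈ Finset.range n, a (k + 1) * f^[k + 1] y := by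
      refine Finset.sum_congr rfl fun k _ => ?_
      rw [hiter (k + 1) k.succ_pos]
    have : a 0 * x = a 0 * y := by
      simp only [Function.iterate_zero_apply] at hx0 hy0
      linarith [hx0, hy0, hsum]
    exact mul_left_cancel₀ ha0 this
  exact aux_mono hI hcont hinj
end

section
/- Let r₁, r₂ ∈ ℝ with r₁ < -1 < r₂ < 0, let A, B be nonzero real polynomials with degrees s, t and leading coefficients a, b, and let F : ℤ → ℝ satisfy F(2j)/|r₂|^{2j} → 0 as j → -∞ and F(2j)/|r₁|^{2j} → 0 as j → +∞. Define x_j = A(j) r₁^j + F(j) + B(j) r₂^j. Then lim_{j→-∞} (x_{2j+2} - x_{2j}) / (|2j|^t |r₂|^{2j}) = (-1)^t (r₂² - 1) b and lim_{j→+∞} (x_{2j+2} - x_{2j}) / ((2j)^s |r₁|^{2j}) = (r₁² - 1) a. -/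
open Filter Polynomial

lemma helper_poly_geom (P : Polynomial ℝ) {c : ℝ} (hc : |c| < 1) :
    Tendsto (fun n : ℕ => P.eval (n : ℝ) * c ^ n) atTop (nhds 0) := by
  induction P using Polynomial.induction_on' with
  | add p q hp hq => simpa [add_mul] using hp.add hq
  | monomial k e =>
      have h := (tendsto_pow_const_mul_const_pow_of_abs_lt_one k hc).const_mul e
      simpa [eval_monomial, mul_assoc] using h

lemma helper_poly_div_pow (P : Polynomial ℝ) :
    Tendsto (fun u : ℝ => P.eval u / u ^ P.natDegree) atTop (nhds P.leadingCoeff) := by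
  rcases eq_or_ne P 0 with rfl | hP
  · simpa using tendsto_const_nhds
  · have hc : P.leadingCoeff ≠ 0 := leadingCoeff_ne_zero.mpr hP
    have h2 : Tendsto (fun u : ℝ => P.eval u / (P.leadingCoeff * u ^ P.natDegree))
        atTop (nhds 1) := by
      refine (Asymptotics.isEquivalent_iff_tendsto_one ?_).mp P.isEquivalent_atTop_lead
      filter_upwards [eventually_gt_atTop (0:ℝ)] with u hu
      exact mul_ne_zero hc (pow_ne_zero _ hu.ne')
    have h3 := h2.const_mul P.leadingCoeff
    simp only [mul_one] at h3
    refine h3.congr fun u => ?_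
    rw [mul_div_assoc', mul_div_mul_left _ _ hc]

lemma helper_tendsto_of_natbot {f : ℤ → ℝ} {l : Filter ℝ}
    (h : Tendsto (fun n : ℕ => f (-(n : ℤ))) atTop l) : Tendsto f atBot l := by
  have hm : (atBot : Filter ℤ) = map (fun n : ℕ => -(n : ℤ)) atTop := by
    rw [show (fun n : ℕ => -(n : ℤ)) = Neg.neg ∘ ((↑) : ℕ → ℤ) from rfl,
      ← Filter.map_map, Nat.map_cast_int_atTop, map_neg_atTop]
  rw [hm, tendsto_map'_iff]
  exact h

lemma helper_tendsto_of_nattop {f : ℤ → ℝ} {l : Filter ℝ}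
    (h : Tendsto (fun n : ℕ => f (n : ℤ)) atTop l) : Tendsto f atTop l := by
  rw [← Nat.map_cast_int_atTop, tendsto_map'_iff]
  exact h

lemma helper_geom_nat (Q : Polynomial ℝ) {c : ℝ} (hc0 : 0 ≤ c) (hc1 : c < 1)
    (f : ℕ → ℝ) (hf : ∀ n : ℕ, 1 ≤ n → |f n| ≤ |Q.eval (n : ℝ) * c ^ n|) :
    Tendsto f atTop (nhds 0) := by
  have hQ : Tendsto (fun n : ℕ => |Q.eval (n : ℝ) * c ^ n|) atTop (nhds 0) := by
    simpa using (helper_poly_geom Q (by rwa [abs_of_nonneg hc0])).abs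
  refine squeeze_zero_norm' ?_ hQ
  filter_upwards [eventually_ge_atTop 1] with n hn
  simpa [Real.norm_eq_abs] using hf n hn

lemma helper_quot2 (P₁ P₂ : Polynomial ℝ) (d : ℕ) (h₁ : P₁.natDegree = d)
    (h₂ : P₂.natDegree = d) (e : ℝ) {α : Type*} {l : Filter α} {m : α → ℝ}
    (hm : Tendsto m l atTop) :
    Tendsto (fun j => (e * P₂.eval (m j) - P₁.eval (m j)) / (m j) ^ d) l
      (nhds (e * P₂.leadingCoeff - P₁.leadingCoeff)) := by
  have h := ((helper_poly_div_pow P₂).const_mul e).sub (helper_poly_div_pow P₁)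
  rw [h₁, h₂] at h
  refine (h.comp hm).congr fun j => ?_
  simp only [Function.comp]
  rw [sub_div, mul_div_assoc]

open Filter Polynomial in
/-- Asymptotics of `x_{2j+2} - x_{2j}` for
`x_j = A(j) r₁^j + F(j) + B(j) r₂^j` with `r₁ < -1 < r₂ < 0`. -/
theorem stmt9 (r₁ r₂ : ℝ) (hr₁ : r₁ < -1) (hr₂ : -1 < r₂) (hr₂0 : r₂ < 0)
    (A B : Polynomial ℝ) (hA : A ≠ 0) (hB : B ≠ 0)
    (s t : ℕ) (hs : s = A.natDegree) (ht : t = B.natDegree)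
    (a b : ℝ) (ha : a = A.leadingCoeff) (hb : b = B.leadingCoeff)
    (F : ℤ → ℝ)
    (hFbot : Tendsto (fun j : ℤ => F (2 * j) / |r₂| ^ (2 * j)) atBot (nhds 0))
    (hFtop : Tendsto (fun j : ℤ => F (2 * j) / |r₁| ^ (2 * j)) atTop (nhds 0))
    (x : ℤ → ℝ)
    (hx : ∀ j : ℤ, x j = A.eval (j : ℝ) * r₁ ^ j + F j + B.eval (j : ℝ) * r₂ ^ j) :
    Tendsto (fun j : ℤ =>
        (x (2 * j + 2) - x (2 * j)) / (|(2 * j : ℝ)| ^ t * |r₂| ^ (2 * j)))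
      atBot (nhds ((-1) ^ t * (r₂ ^ 2 - 1) * b)) ∧
    Tendsto (fun j : ℤ =>
        (x (2 * j + 2) - x (2 * j)) / ((2 * j : ℝ) ^ s * |r₁| ^ (2 * j)))
      atTop (nhds ((r₁ ^ 2 - 1) * a)) := by
  have hr10 : r₁ ≠ 0 := by intro h; rw [h] at hr₁; linarith
  have hr20 : r₂ ≠ 0 := ne_of_lt hr₂0
  have h1sq : 1 < r₁ ^ 2 := by nlinarith
  have h2sq : r₂ ^ 2 < 1 := by nlinarith
  have h2sqp : 0 < r₂ ^ 2 := by positivity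
  have h1sqp : 0 < r₁ ^ 2 := by positivity
  have hc0 : 0 < r₂ ^ 2 / r₁ ^ 2 := by positivity
  have hc1 : r₂ ^ 2 / r₁ ^ 2 < 1 := (div_lt_one h1sqp).mpr (by linarith)
  -- zpow identities
  have e3 : ∀ j : ℤ, |r₂| ^ (2 * j) = (r₂ ^ 2) ^ j := by
    intro j
    rw [zpow_mul, show |r₂| ^ (2:ℤ) = r₂ ^ 2 by rw [zpow_two, ← sq, sq_abs]]
  have e3' : ∀ j : ℤ, |r₁| ^ (2 * j) = (r₁ ^ 2) ^ j := by
    intro j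
    rw [zpow_mul, show |r₁| ^ (2:ℤ) = r₁ ^ 2 by rw [zpow_two, ← sq, sq_abs]]
  have e1 : ∀ j : ℤ, r₁ ^ (2 * j + 2) = (r₁ ^ 2) ^ j * r₁ ^ 2 := by
    intro j
    rw [zpow_add₀ hr10, zpow_mul, zpow_two, ← sq]
  have e1' : ∀ j : ℤ, r₁ ^ (2 * j) = (r₁ ^ 2) ^ j := by
    intro j; rw [zpow_mul, zpow_two, ← sq]
  have e2 : ∀ j : ℤ, r₂ ^ (2 * j + 2) = (r₂ ^ 2) ^ j * r₂ ^ 2 := by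
    intro j
    rw [zpow_add₀ hr20, zpow_mul, zpow_two, ← sq]
  have e2' : ∀ j : ℤ, r₂ ^ (2 * j) = (r₂ ^ 2) ^ j := by
    intro j; rw [zpow_mul, zpow_two, ← sq]
  constructor
  · -- atBot
    set f1 : ℤ → ℝ := fun j =>
      (r₁ ^ 2 * A.eval (2 * (j:ℝ) + 2) - A.eval (2 * (j:ℝ))) * (r₁ ^ 2 / r₂ ^ 2) ^ j
        / |2 * (j:ℝ)| ^ t with hf1
    set f2 : ℤ → ℝ := fun j =>
      (F (2 * j + 2) - F (2 * j)) / (|2 * (j:ℝ)| ^ t * |r₂| ^ (2 * j)) with hf2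
    set f3 : ℤ → ℝ := fun j =>
      (r₂ ^ 2 * B.eval (2 * (j:ℝ) + 2) - B.eval (2 * (j:ℝ))) / |2 * (j:ℝ)| ^ t with hf3
    have T1 : Tendsto f1 atBot (nhds 0) := by
      apply helper_tendsto_of_natbot
      set Q : Polynomial ℝ :=
        C (r₁ ^ 2) * A.comp (C 2 - C 2 * X) - A.comp (-(C 2 * X)) with hQ
      apply helper_geom_nat Q hc0.le hc1
      intro n hn
      have hQe : Q.eval (n : ℝ) =
          r₁ ^ 2 * A.eval (2 * (-(n:ℝ)) + 2) - A.eval (2 * (-(n:ℝ))) := by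
        simp [hQ, eval_comp]
        ring_nf
        tauto
      have hz : (r₁ ^ 2 / r₂ ^ 2) ^ (-(n:ℤ)) = (r₂ ^ 2 / r₁ ^ 2) ^ n := by
        rw [zpow_neg, ← inv_zpow, inv_div, zpow_natCast]
      have habs : |2 * (-(n:ℝ))| = 2 * n := by
        rw [show (2:ℝ) * -(n:ℝ) = -(2 * n) by ring, abs_neg,
          abs_of_nonneg (by positivity)]
      have hval : f1 (-(n:ℤ)) = Q.eval (n:ℝ) * (r₂ ^ 2 / r₁ ^ 2) ^ n / (2 * n) ^ t := by
        simp only [hf1, Int.cast_neg, Int.cast_natCast]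
        rw [hz, habs, hQe]
      rw [hval, abs_div, abs_of_nonneg (show (0:ℝ) ≤ (2 * (n:ℝ)) ^ t by positivity)]
      exact div_le_self (abs_nonneg _)
        (one_le_pow₀ (by exact_mod_cast by linarith : (1:ℝ) ≤ 2 * (n:ℝ)))
    have T2 : Tendsto f2 atBot (nhds 0) := by
      have hshift : Tendsto (fun j : ℤ => F (2 * (j + 1)) / |r₂| ^ (2 * (j + 1)))
          atBot (nhds 0) := hFbot.comp (tendsto_atBot_add_const_right atBot 1 tendsto_id)
      have hdiff : Tendsto
          (fun j : ℤ => F (2 * j + 2) / |r₂| ^ (2 * j) - F (2 * j) / |r₂| ^ (2 * j))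
          atBot (nhds 0) := by
        have h4 := (hshift.mul_const (r₂ ^ 2)).sub hFbot
        rw [zero_mul, sub_zero] at h4
        refine h4.congr fun j => ?_
        have hxx : (2 : ℤ) * (j + 1) = 2 * j + 2 := by ring
        have e5 : |r₂| ^ (2 * j + 2) = (r₂ ^ 2) ^ j * r₂ ^ 2 := by
          rw [zpow_add₀ (abs_ne_zero.mpr hr20), e3,
            show |r₂| ^ (2:ℤ) = r₂ ^ 2 by rw [zpow_two, ← sq, sq_abs]]
        rw [hxx, e5, e3, ← div_div, div_mul_cancel₀ _ (ne_of_gt h2sqp)]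
      refine squeeze_zero_norm' ?_ (by simpa using hdiff.abs)
      filter_upwards [eventually_le_atBot (-1 : ℤ)] with j hj
      have hjr : (j : ℝ) ≤ -1 := by exact_mod_cast hj
      have hK : (1:ℝ) ≤ |2 * (j:ℝ)| ^ t := by
        apply one_le_pow₀
        rw [abs_of_nonpos (by linarith)]
        linarith
      have : f2 j = (F (2 * j + 2) / |r₂| ^ (2 * j) - F (2 * j) / |r₂| ^ (2 * j))
          / |2 * (j:ℝ)| ^ t := by
        simp only [hf2]
        rw [div_sub_div_same, div_div]
        ring_nf
      rw [this, Real.norm_eq_abs, abs_div, abs_of_nonneg (by positivity : (0:ℝ) ≤ |2 * (j:ℝ)| ^ t)]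
      exact div_le_self (abs_nonneg _) hK
    have T3 : Tendsto f3 atBot (nhds ((-1) ^ t * (r₂ ^ 2 - 1) * b)) := by
      set P₁ : Polynomial ℝ := B.comp (-X) with hP₁
      set P₂ : Polynomial ℝ := B.comp (C 2 - X) with hP₂
      have hq1 : (-X : Polynomial ℝ).natDegree = 1 := by simp
      have hq2 : (C 2 - X : Polynomial ℝ).natDegree = 1 := by
        rw [show (C 2 - X : Polynomial ℝ) = -(X - C 2) by ring, natDegree_neg,
          natDegree_X_sub_C]
      have hd1 : P₁.natDegree = t := by rw [hP₁, natDegree_comp, hq1, ht, mul_one]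
      have hd2 : P₂.natDegree = t := by rw [hP₂, natDegree_comp, hq2, ht, mul_one]
      have hl1 : P₁.leadingCoeff = b * (-1) ^ t := by
        rw [hP₁, leadingCoeff_comp (by simp [hq1]), hb, ht]; simp
      have hl2 : P₂.leadingCoeff = b * (-1) ^ t := by
        rw [hP₂, leadingCoeff_comp (by simp [hq2]), hb, ht]
        congr 1
        rw [show (C 2 - X : Polynomial ℝ) = -(X - C 2) by ring, leadingCoeff_neg,
          (monic_X_sub_C (2:ℝ)).leadingCoeff]
      have hm : Tendsto (fun j : ℤ => -(2 * (j:ℝ))) atBot atTop := by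
        apply tendsto_neg_atBot_atTop.comp
        exact (tendsto_const_mul_atBot_of_pos two_pos).mpr
          (tendsto_intCast_atBot_iff.mpr tendsto_id)
      have h := helper_quot2 P₁ P₂ t hd1 hd2 (r₂ ^ 2) hm
      rw [hl1, hl2] at h
      have hlim : Tendsto f3 atBot
          (nhds (r₂ ^ 2 * (b * (-1) ^ t) - b * (-1) ^ t)) := by
        refine h.congr' ?_
        filter_upwards [eventually_le_atBot (-1 : ℤ)] with j hj
        have hjr : (j : ℝ) ≤ -1 := by exact_mod_cast hj
        have hP2e : P₂.eval (-(2 * (j:ℝ))) = B.eval (2 * (j:ℝ) + 2) := by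
          rw [hP₂, eval_comp]
          norm_num
          ring_nf
        have hP1e : P₁.eval (-(2 * (j:ℝ))) = B.eval (2 * (j:ℝ)) := by
          rw [hP₁, eval_comp]
          norm_num
        have habs : (-(2 * (j:ℝ))) ^ t = |2 * (j:ℝ)| ^ t := by
          rw [abs_of_nonpos (by linarith)]
        rw [hP2e, hP1e, habs, hf3]
      convert hlim using 2
      ring
    have hsum := (T1.add T2).add T3
    rw [add_zero, zero_add] at hsum
    refine hsum.congr' ?_
    filter_upwards [eventually_le_atBot (-1 : ℤ)] with j hj
    have hjr : (j : ℝ) ≤ -1 := by exact_mod_cast hj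
    have hY : (0:ℝ) < (r₂ ^ 2) ^ j := zpow_pos h2sqp j
    have hX : (0:ℝ) < (r₁ ^ 2) ^ j := zpow_pos h1sqp j
    have hK : (0:ℝ) < |2 * (j:ℝ)| ^ t := by
      apply pow_pos; rw [abs_of_nonpos (by linarith)]; linarith
    simp only [hf1, hf2, hf3, Pi.add_apply]
    rw [hx, hx, e1, e1', e2, e2', e3, div_zpow]
    push_cast
    field_simp
    ring
  · -- atTop
    set g1 : ℤ → ℝ := fun j =>
      (r₁ ^ 2 * A.eval (2 * (j:ℝ) + 2) - A.eval (2 * (j:ℝ))) / (2 * (j:ℝ)) ^ s with hg1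
    set g2 : ℤ → ℝ := fun j =>
      (F (2 * j + 2) - F (2 * j)) / ((2 * (j:ℝ)) ^ s * |r₁| ^ (2 * j)) with hg2
    set g3 : ℤ → ℝ := fun j =>
      (r₂ ^ 2 * B.eval (2 * (j:ℝ) + 2) - B.eval (2 * (j:ℝ))) * (r₂ ^ 2 / r₁ ^ 2) ^ j
        / (2 * (j:ℝ)) ^ s with hg3
    have hmtop : Tendsto (fun j : ℤ => 2 * (j:ℝ)) atTop atTop :=
      (tendsto_const_mul_atTop_of_pos two_pos).mpr (tendsto_intCast_atTop_iff.mpr tendsto_id)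
    have G1 : Tendsto g1 atTop (nhds ((r₁ ^ 2 - 1) * a)) := by
      set P₂ : Polynomial ℝ := A.comp (X + C 2) with hP₂
      have hq2 : (X + C 2 : Polynomial ℝ).natDegree = 1 := natDegree_X_add_C 2
      have hd1 : A.natDegree = s := hs.symm
      have hd2 : P₂.natDegree = s := by rw [hP₂, natDegree_comp, hq2, ← hs, mul_one]
      have hl2 : P₂.leadingCoeff = a := by
        rw [hP₂, leadingCoeff_comp (by simp [hq2]), (monic_X_add_C (2:ℝ)).leadingCoeff,
          one_pow, mul_one, ha]
      have h := helper_quot2 A P₂ s hd1 hd2 (r₁ ^ 2) hmtop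
      rw [hl2, ← ha] at h
      have hlim : Tendsto g1 atTop (nhds (r₁ ^ 2 * a - a)) := by
        refine h.congr fun j => ?_
        have hP2e : P₂.eval (2 * (j:ℝ)) = A.eval (2 * (j:ℝ) + 2) := by
          rw [hP₂, eval_comp]
          norm_num
        rw [hP2e, hg1]
      convert hlim using 2
      ring
    have G2 : Tendsto g2 atTop (nhds 0) := by
      have hshift : Tendsto (fun j : ℤ => F (2 * (j + 1)) / |r₁| ^ (2 * (j + 1)))
          atTop (nhds 0) := hFtop.comp (tendsto_atTop_add_const_right atTop 1 tendsto_id)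
      have hdiff : Tendsto
          (fun j : ℤ => F (2 * j + 2) / |r₁| ^ (2 * j) - F (2 * j) / |r₁| ^ (2 * j))
          atTop (nhds 0) := by
        have h4 := (hshift.mul_const (r₁ ^ 2)).sub hFtop
        rw [zero_mul, sub_zero] at h4
        refine h4.congr fun j => ?_
        have hxx : (2 : ℤ) * (j + 1) = 2 * j + 2 := by ring
        have e5 : |r₁| ^ (2 * j + 2) = (r₁ ^ 2) ^ j * r₁ ^ 2 := by
          rw [zpow_add₀ (abs_ne_zero.mpr hr10), e3',
            show |r₁| ^ (2:ℤ) = r₁ ^ 2 by rw [zpow_two, ← sq, sq_abs]]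
        rw [hxx, e5, e3', ← div_div, div_mul_cancel₀ _ (ne_of_gt h1sqp)]
      refine squeeze_zero_norm' ?_ (by simpa using hdiff.abs)
      filter_upwards [eventually_ge_atTop (1 : ℤ)] with j hj
      have hjr : (1:ℝ) ≤ (j : ℝ) := by exact_mod_cast hj
      have hK : (1:ℝ) ≤ (2 * (j:ℝ)) ^ s := one_le_pow₀ (by linarith)
      have : g2 j = (F (2 * j + 2) / |r₁| ^ (2 * j) - F (2 * j) / |r₁| ^ (2 * j))
          / (2 * (j:ℝ)) ^ s := by
        simp only [hg2]
        rw [div_sub_div_same, div_div]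
        ring_nf
      rw [this, Real.norm_eq_abs, abs_div,
        abs_of_nonneg (by positivity : (0:ℝ) ≤ (2 * (j:ℝ)) ^ s)]
      exact div_le_self (abs_nonneg _) hK
    have G3 : Tendsto g3 atTop (nhds 0) := by
      apply helper_tendsto_of_nattop
      set Q : Polynomial ℝ :=
        C (r₂ ^ 2) * B.comp (C 2 * X + C 2) - B.comp (C 2 * X) with hQ
      apply helper_geom_nat Q hc0.le hc1
      intro n hn
      have hQe : Q.eval (n : ℝ) =
          r₂ ^ 2 * B.eval (2 * (n:ℝ) + 2) - B.eval (2 * (n:ℝ)) := by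
        simp [hQ, eval_comp]
      have hz : (r₂ ^ 2 / r₁ ^ 2) ^ ((n:ℤ)) = (r₂ ^ 2 / r₁ ^ 2) ^ n := zpow_natCast _ n
      have hval : g3 ((n:ℤ)) = Q.eval (n:ℝ) * (r₂ ^ 2 / r₁ ^ 2) ^ n / (2 * n) ^ s := by
        simp only [hg3, Int.cast_natCast]
        rw [hz, hQe]
      rw [hval, abs_div, abs_of_nonneg (show (0:ℝ) ≤ (2 * (n:ℝ)) ^ s by positivity)]
      exact div_le_self (abs_nonneg _)
        (one_le_pow₀ (by exact_mod_cast by linarith : (1:ℝ) ≤ 2 * (n:ℝ)))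
    have hsum := (G1.add G2).add G3
    rw [add_zero, add_zero] at hsum
    refine hsum.congr' ?_
    filter_upwards [eventually_ge_atTop (1 : ℤ)] with j hj
    have hjr : (1:ℝ) ≤ (j : ℝ) := by exact_mod_cast hj
    have hY : (0:ℝ) < (r₂ ^ 2) ^ j := zpow_pos h2sqp j
    have hX : (0:ℝ) < (r₁ ^ 2) ^ j := zpow_pos h1sqp j
    have hK : (0:ℝ) < (2 * (j:ℝ)) ^ s := by positivity
    simp only [hg1, hg2, hg3, Pi.add_apply]
    rw [hx, hx, e1, e1', e2, e2', e3', div_zpow]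
    push_cast
    field_simp
    ring
end

section
/- Let r₁, r₂ ∈ ℝ with r₁ < -1 < r₂ < 0, let A, B be nonzero real polynomials, and let F : ℤ → ℝ satisfy F(j)/|r₂|^j → 0 as j → -∞ and F(j)/|r₁|^j → 0 as j → +∞. Then the two-sided sequence x_j = A(j) r₁^j + F(j) + B(j) r₂^j cannot simultaneously have (-1)^j(x_{j+1}-x_j) of constant sign over ℤ and x_{2j+2}-x_{2j} of constant sign over j ∈ ℤ. -/
/-!
A sequence `u j = P(j) ρ^j + E j + Q(j) σ^j` with `0 < σ < ρ`, `P, Q ≠ 0` and `E` negligible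
against `ρ^j` at `+∞` and against `σ^j` at `-∞` has, for `j ≫ 0`, the sign of the leading
coefficient of `P`, and, for `j ≪ 0`, the sign of `(-1)^(deg Q) · lc Q`. If `u` has constant
sign, these two numbers therefore have the same sign.

Both sequences of the theorem have this shape. For `(-1)^j (x_{j+1} - x_j)` the bases are
`|r₁|`, `|r₂|` and the leading coefficients `lc A · (r₁ - 1)`, `lc B · (r₂ - 1)`, which
forces `lc A · (-1)^(deg B) · lc B > 0`. For `x_{2j+2} - x_{2j}` the bases are `r₁²`, `r₂²`
and the leading coefficients `lc A · 2^(deg A) · (r₁² - 1)`, `lc B · 2^(deg B) · (r₂² - 1)`;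
as `r₂² < 1 < r₁²`, this forces the same product to be negative.
-/

def ConstSign (u : ℤ → ℝ) : Prop := (∀ j, 0 ≤ u j) ∨ (∀ j, u j ≤ 0)

open Filter Polynomial Asymptotics

namespace Polynomial

theorem eventually_leadingCoeff_sq_div_two_le (P : ℝ[X]) :
    ∀ᶠ x in atTop, P.leadingCoeff ^ 2 / 2 ≤ P.leadingCoeff * P.eval x := by
  rcases eq_or_ne P 0 with rfl | hP
  · simp
  set a := P.leadingCoeff
  have ha : 0 < a ^ 2 := by positivity [leadingCoeff_ne_zero.2 hP]
  have hlim : Tendsto (fun x => a * (P.eval x / x ^ P.natDegree)) atTop (nhds (a ^ 2)) := by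
    have := P.div_tendsto_atTop_leadingCoeff_div_of_degree_eq (X ^ P.natDegree)
      (by rw [degree_X_pow, degree_eq_natDegree hP])
    simpa [sq] using this.const_mul a
  filter_upwards [hlim.eventually (eventually_ge_nhds (by linarith : a ^ 2 / 2 < a ^ 2)),
    eventually_ge_atTop 1] with x hx hx1
  have hxn : 1 ≤ x ^ P.natDegree := one_le_pow₀ hx1
  calc a ^ 2 / 2 ≤ a ^ 2 / 2 * x ^ P.natDegree := le_mul_of_one_le_right (by positivity) hxn
    _ ≤ a * (P.eval x / x ^ P.natDegree) * x ^ P.natDegree := by gcongr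
    _ = a * P.eval x := by field_simp

theorem isLittleO_eval_mul_zpow_atTop (Q : ℝ[X]) {σ ρ : ℝ} (hσ : 0 < σ) (hσρ : σ < ρ) :
    (fun j : ℤ => Q.eval (j : ℝ) * σ ^ j) =o[atTop] (fun j => ρ ^ j) := by
  have hb : 0 < Real.log (ρ / σ) := Real.log_pos ((one_lt_div hσ).2 hσρ)
  have hexp : (fun x => Q.eval x) =o[atTop] (fun x => Real.exp (Real.log (ρ / σ) * x)) :=
    (Q.isBigO_atTop_of_degree_le (X ^ Q.natDegree) (by simp)).trans_isLittleO
      (by simpa using isLittleO_pow_exp_pos_mul_atTop Q.natDegree hb)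
  refine ((hexp.comp_tendsto tendsto_intCast_atTop_atTop).mul_isBigO
    (isBigO_refl (fun j : ℤ => σ ^ j) atTop)).congr_right fun j => ?_
  rw [Function.comp_apply, ← Real.rpow_def_of_pos (div_pos (hσ.trans hσρ) hσ),
    Real.rpow_intCast, div_zpow, div_mul_cancel₀ _ (zpow_ne_zero _ hσ.ne')]

theorem natDegree_comp_mul_C_sub_comp {K : Type*} [Field K] {A ℓ₁ ℓ₂ : K[X]}
    (hA : A ≠ 0) (h₁ : ℓ₁.natDegree = 1) (h₂ : ℓ₂.natDegree = 1)
    (hℓ : ℓ₁.leadingCoeff = ℓ₂.leadingCoeff) {r : K} (hr : r ≠ 1) :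
    (A.comp ℓ₁ * C r - A.comp ℓ₂).natDegree = A.natDegree ∧
      (A.comp ℓ₁ * C r - A.comp ℓ₂).leadingCoeff =
        A.leadingCoeff * ℓ₁.leadingCoeff ^ A.natDegree * (r - 1) := by
  have hcomp : ∀ ℓ : K[X], ℓ.natDegree = 1 → (A.comp ℓ).natDegree = A.natDegree ∧
      (A.comp ℓ).coeff A.natDegree = A.leadingCoeff * ℓ.leadingCoeff ^ A.natDegree := by
    intro ℓ hℓ
    have hdeg : (A.comp ℓ).natDegree = A.natDegree := by rw [natDegree_comp, hℓ, mul_one]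
    refine ⟨hdeg, ?_⟩
    rw [← leadingCoeff_comp (by rw [hℓ]; exact one_ne_zero), leadingCoeff, hdeg]
  obtain ⟨hd₁, hc₁⟩ := hcomp ℓ₁ h₁
  obtain ⟨hd₂, hc₂⟩ := hcomp ℓ₂ h₂
  have hcoeff : (A.comp ℓ₁ * C r - A.comp ℓ₂).coeff A.natDegree =
      A.leadingCoeff * ℓ₁.leadingCoeff ^ A.natDegree * (r - 1) := by
    rw [coeff_sub, coeff_mul_C, hc₁, hc₂, hℓ]
    ring
  have hne : A.leadingCoeff * ℓ₁.leadingCoeff ^ A.natDegree * (r - 1) ≠ 0 := by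
    have hℓ₁ : ℓ₁ ≠ 0 := by rintro rfl; simp at h₁
    exact mul_ne_zero (mul_ne_zero (leadingCoeff_ne_zero.2 hA)
      (pow_ne_zero _ (leadingCoeff_ne_zero.2 hℓ₁))) (sub_ne_zero.2 hr)
  have hle : (A.comp ℓ₁ * C r - A.comp ℓ₂).natDegree ≤ A.natDegree :=
    (natDegree_sub_le_of_le ((natDegree_mul_C_le _ _).trans hd₁.le) hd₂.le).trans
      (max_self _).le
  have hdeg := natDegree_eq_of_le_of_coeff_ne_zero hle (hcoeff ▸ hne)
  exact ⟨hdeg, by rw [leadingCoeff, hdeg, hcoeff]⟩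

end Polynomial

section ExponentialPolynomial

variable {ρ σ : ℝ} {P Q : ℝ[X]} {E : ℤ → ℝ}

theorem eventually_pos_leadingCoeff_mul_atTop (hσ : 0 < σ) (hσρ : σ < ρ) (hP : P ≠ 0)
    (hE : E =o[atTop] (fun j => ρ ^ j)) :
    ∀ᶠ j : ℤ in atTop,
      0 < P.leadingCoeff * (P.eval (j : ℝ) * ρ ^ j + E j + Q.eval (j : ℝ) * σ ^ j) := by
  set a := P.leadingCoeff
  have ha : 0 < a ^ 2 / 2 := by positivity [leadingCoeff_ne_zero.2 hP]
  have hrest :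
      Tendsto (fun j => a * ((E j + Q.eval (j : ℝ) * σ ^ j) / ρ ^ j)) atTop (nhds 0) := by
    simpa using
      ((hE.add (Q.isLittleO_eval_mul_zpow_atTop hσ hσρ)).tendsto_div_nhds_zero).const_mul a
  filter_upwards [hrest.eventually (eventually_gt_nhds (neg_neg_of_pos ha)),
    tendsto_intCast_atTop_atTop.eventually P.eventually_leadingCoeff_sq_div_two_le] with j hj hPj
  have hρj : 0 < ρ ^ j := zpow_pos (hσ.trans hσρ) j
  have : a * (P.eval (j : ℝ) * ρ ^ j + E j + Q.eval (j : ℝ) * σ ^ j) =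
      (a * P.eval (j : ℝ) + a * ((E j + Q.eval (j : ℝ) * σ ^ j) / ρ ^ j)) * ρ ^ j := by
    field_simp
    ring
  rw [this]
  exact mul_pos (by linarith) hρj

theorem eventually_pos_leadingCoeff_mul_atBot (hσ : 0 < σ) (hσρ : σ < ρ) (hQ : Q ≠ 0)
    (hE : E =o[atBot] (fun j => σ ^ j)) :
    ∀ᶠ j : ℤ in atBot, 0 < (-1) ^ Q.natDegree * Q.leadingCoeff *
      (P.eval (j : ℝ) * ρ ^ j + E j + Q.eval (j : ℝ) * σ ^ j) := by
  -- `j ↦ -j` turns `σ ^ j` into the dominant term `(σ⁻¹) ^ j` at `+∞`, with polynomial `Q(-X)`.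
  have hQ' : Q.comp (-X) ≠ 0 := by
    rw [← leadingCoeff_ne_zero, comp_neg_X_leadingCoeff_eq]
    exact mul_ne_zero (pow_ne_zero _ (by norm_num)) (leadingCoeff_ne_zero.2 hQ)
  have hE' : (fun j => E (-j)) =o[atTop] (fun j => σ⁻¹ ^ j) :=
    (hE.comp_tendsto tendsto_neg_atTop_atBot).congr_right fun j => by simp [inv_zpow']
  have := eventually_pos_leadingCoeff_mul_atTop (inv_pos.2 (hσ.trans hσρ))
    (inv_strictAnti₀ hσ hσρ) hQ' (Q := P.comp (-X)) hE'
  filter_upwards [tendsto_neg_atBot_atTop.eventually this] with j hj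
  simpa [inv_zpow', add_comm, add_left_comm, add_assoc] using hj

end ExponentialPolynomial

namespace ConstSign

theorem pos_mul_of_exists {u : ℤ → ℝ} (hu : ConstSign u) {a b : ℝ} (ha : ∃ i, 0 < a * u i)
    (hb : ∃ j, 0 < b * u j) : 0 < a * b := by
  obtain ⟨i, hi⟩ := ha
  obtain ⟨j, hj⟩ := hb
  have hij : 0 ≤ u i * u j := by
    rcases hu with h | h
    · exact mul_nonneg (h i) (h j)
    · exact mul_nonneg_of_nonpos_of_nonpos (h i) (h j)
  refine pos_of_mul_pos_left (b := u i * u j) ?_ hij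
  calc 0 < a * u i * (b * u j) := mul_pos hi hj
    _ = a * b * (u i * u j) := by ring

theorem leadingCoeff_mul_pos {ρ σ : ℝ} (hσ : 0 < σ) (hσρ : σ < ρ) {P Q : ℝ[X]}
    (hP : P ≠ 0) (hQ : Q ≠ 0) {E : ℤ → ℝ} (hEtop : E =o[atTop] (fun j => ρ ^ j))
    (hEbot : E =o[atBot] (fun j => σ ^ j))
    (hu : ConstSign fun j => P.eval (j : ℝ) * ρ ^ j + E j + Q.eval (j : ℝ) * σ ^ j) :
    0 < P.leadingCoeff * ((-1) ^ Q.natDegree * Q.leadingCoeff) :=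
  hu.pos_mul_of_exists (eventually_pos_leadingCoeff_mul_atTop hσ hσρ hP hEtop).exists
    (eventually_pos_leadingCoeff_mul_atBot hσ hσρ hQ hEbot).exists

end ConstSign

namespace Polynomial

variable {K : Type*} [Field K]

theorem natDegree_comp_X_add_one_mul_C_sub {A : K[X]} (hA : A ≠ 0) {r : K} (hr : r ≠ 1) :
    (A.comp (X + C 1) * C r - A).natDegree = A.natDegree ∧
      (A.comp (X + C 1) * C r - A).leadingCoeff = A.leadingCoeff * (r - 1) := by
  have := natDegree_comp_mul_C_sub_comp hA (natDegree_X_add_C 1) natDegree_X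
    (by rw [leadingCoeff_X_add_C, leadingCoeff_X]) hr
  rwa [comp_X, leadingCoeff_X_add_C, one_pow, mul_one] at this

theorem natDegree_comp_two_mul_X_add_two_mul_C_sub {A : K[X]} (hA : A ≠ 0) {r : K}
    (hr : r ≠ 1) (h2 : (2 : K) ≠ 0) :
    (A.comp (C 2 * X + C 2) * C r - A.comp (C 2 * X)).natDegree = A.natDegree ∧
      (A.comp (C 2 * X + C 2) * C r - A.comp (C 2 * X)).leadingCoeff =
        A.leadingCoeff * 2 ^ A.natDegree * (r - 1) := by
  simpa [leadingCoeff_linear h2] using natDegree_comp_mul_C_sub_comp hA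
    (natDegree_linear h2) (natDegree_C_mul_X 2 h2) (by rw [leadingCoeff_linear h2]; simp) hr

theorem neg_one_zpow_mul_eval_mul_zpow_add_one_sub (A : K[X]) {r : K} (hr : r ≠ 0) (j : ℤ) :
    (-1) ^ j * (A.eval ((j + 1 : ℤ) : K) * r ^ (j + 1) - A.eval (j : K) * r ^ j) =
      (A.comp (X + C 1) * C r - A).eval (j : K) * (-r) ^ j := by
  rw [neg_eq_neg_one_mul r, mul_zpow, zpow_add_one₀ hr]
  simp only [eval_sub, eval_mul, eval_comp, eval_add, eval_X, eval_C]
  push_cast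
  ring

theorem eval_mul_zpow_two_mul_add_two_sub (A : K[X]) {r : K} (hr : r ≠ 0) (j : ℤ) :
    A.eval ((2 * j + 2 : ℤ) : K) * r ^ (2 * j + 2) - A.eval ((2 * j : ℤ) : K) * r ^ (2 * j) =
      (A.comp (C 2 * X + C 2) * C (r ^ 2) - A.comp (C 2 * X)).eval (j : K) * (r ^ 2) ^ j := by
  rw [zpow_add₀ hr, zpow_mul, zpow_ofNat]
  simp only [eval_sub, eval_mul, eval_comp, eval_add, eval_X, eval_C]
  push_cast
  ring

end Polynomial

section LittleO

variable {l l' : Filter ℤ} {F : ℤ → ℝ} {c : ℝ}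

theorem Asymptotics.IsLittleO.comp_add_const_zpow (hc : c ≠ 0)
    (hF : F =o[l'] (fun j => c ^ j)) {φ : ℤ → ℤ} (k : ℤ)
    (hφ : Tendsto (fun j => φ j + k) l l') :
    (fun j => F (φ j + k)) =o[l] (fun j => c ^ φ j) :=
  (hF.comp_tendsto hφ).trans_isBigO <| (isBigO_const_mul_self (c ^ k) _ l).congr_left
    fun j => by rw [Function.comp_apply, zpow_add₀ hc, mul_comm]

theorem isLittleO_neg_one_zpow_mul_add_one_sub (hc : c ≠ 0) (hF : F =o[l] (fun j => c ^ j))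
    (hl : Tendsto (fun j => j + 1) l l) :
    (fun j => (-1) ^ j * (F (j + 1) - F j)) =o[l] (fun j => c ^ j) :=
  isLittleO_norm_left.mp <| by
    simpa [abs_neg_one_zpow] using
      ((hF.comp_add_const_zpow hc (φ := id) 1 hl).sub hF).norm_left

theorem isLittleO_two_mul_add_two_sub (hc : c ≠ 0) (hF : F =o[l] (fun j => c ^ j))
    (h2 : Tendsto (fun j => 2 * j) l l) (h22 : Tendsto (fun j => 2 * j + 2) l l) :
    (fun j => F (2 * j + 2) - F (2 * j)) =o[l] (fun j => (c ^ 2) ^ j) := by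
  simpa [zpow_mul] using (hF.comp_add_const_zpow hc 2 h22).sub (hF.comp_tendsto h2)

end LittleO

section Orbit

variable {r₁ r₂ : ℝ} {A B : ℝ[X]} {F x : ℤ → ℝ}

theorem leadingCoeff_mul_pos_of_constSign_alternating_diff (hr₁₂ : r₁ < r₂)
    (hr₂ : r₂ < 0) (hA : A ≠ 0) (hB : B ≠ 0) (hFbot : F =o[atBot] (fun j => |r₂| ^ j))
    (hFtop : F =o[atTop] (fun j => |r₁| ^ j))
    (hx : ∀ j : ℤ, x j = A.eval (j : ℝ) * r₁ ^ j + F j + B.eval (j : ℝ) * r₂ ^ j)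
    (hcs : ConstSign fun j => (-1 : ℝ) ^ j * (x (j + 1) - x j)) :
    0 < A.leadingCoeff * ((-1) ^ B.natDegree * B.leadingCoeff) := by
  have hr₁ : r₁ < 0 := hr₁₂.trans hr₂
  rw [abs_of_neg hr₁] at hFtop
  rw [abs_of_neg hr₂] at hFbot
  obtain ⟨-, hlcA⟩ := natDegree_comp_X_add_one_mul_C_sub hA (r := r₁) (by linarith)
  obtain ⟨hdegB, hlcB⟩ := natDegree_comp_X_add_one_mul_C_sub hB (r := r₂) (by linarith)
  have hseq : (fun j => (-1 : ℝ) ^ j * (x (j + 1) - x j)) = fun j : ℤ =>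
      (A.comp (X + C 1) * C r₁ - A).eval (j : ℝ) * (-r₁) ^ j +
        (-1 : ℝ) ^ j * (F (j + 1) - F j) +
        (B.comp (X + C 1) * C r₂ - B).eval (j : ℝ) * (-r₂) ^ j := by
    funext j
    rw [← neg_one_zpow_mul_eval_mul_zpow_add_one_sub _ hr₁.ne,
      ← neg_one_zpow_mul_eval_mul_zpow_add_one_sub _ hr₂.ne, hx, hx]
    ring
  rw [hseq] at hcs
  have key := hcs.leadingCoeff_mul_pos (neg_pos.2 hr₂) (neg_lt_neg hr₁₂)
    (leadingCoeff_ne_zero.1 (hlcA ▸ mul_ne_zero (leadingCoeff_ne_zero.2 hA) (by linarith)))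
    (leadingCoeff_ne_zero.1 (hlcB ▸ mul_ne_zero (leadingCoeff_ne_zero.2 hB) (by linarith)))
    (isLittleO_neg_one_zpow_mul_add_one_sub (by linarith) hFtop
      (tendsto_atTop_add_const_right _ 1 tendsto_id))
    (isLittleO_neg_one_zpow_mul_add_one_sub (by linarith) hFbot
      (tendsto_atBot_add_const_right _ 1 tendsto_id))
  rw [hlcA, hlcB, hdegB] at key
  refine pos_of_mul_pos_left (b := (r₁ - 1) * (r₂ - 1)) ?_ (by nlinarith)
  linear_combination key

theorem leadingCoeff_mul_neg_of_constSign_even_diff (hr₁ : r₁ < -1) (hr₂ : -1 < r₂)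
    (hr₂0 : r₂ < 0) (hA : A ≠ 0) (hB : B ≠ 0) (hFbot : F =o[atBot] (fun j => |r₂| ^ j))
    (hFtop : F =o[atTop] (fun j => |r₁| ^ j))
    (hx : ∀ j : ℤ, x j = A.eval (j : ℝ) * r₁ ^ j + F j + B.eval (j : ℝ) * r₂ ^ j)
    (hcs : ConstSign fun j => x (2 * j + 2) - x (2 * j)) :
    A.leadingCoeff * ((-1) ^ B.natDegree * B.leadingCoeff) < 0 := by
  have hr₁sq : 1 < r₁ ^ 2 := by nlinarith
  have hr₂sq : r₂ ^ 2 < 1 := by nlinarith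
  obtain ⟨-, hlcA⟩ :=
    natDegree_comp_two_mul_X_add_two_mul_C_sub hA (r := r₁ ^ 2) hr₁sq.ne' two_ne_zero
  obtain ⟨hdegB, hlcB⟩ :=
    natDegree_comp_two_mul_X_add_two_mul_C_sub hB (r := r₂ ^ 2) hr₂sq.ne two_ne_zero
  have hseq : (fun j => x (2 * j + 2) - x (2 * j)) = fun j : ℤ =>
      (A.comp (C 2 * X + C 2) * C (r₁ ^ 2) - A.comp (C 2 * X)).eval (j : ℝ) * (r₁ ^ 2) ^ j +
        (F (2 * j + 2) - F (2 * j)) +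
        (B.comp (C 2 * X + C 2) * C (r₂ ^ 2) - B.comp (C 2 * X)).eval (j : ℝ) *
          (r₂ ^ 2) ^ j := by
    funext j
    rw [← eval_mul_zpow_two_mul_add_two_sub _ (by linarith),
      ← eval_mul_zpow_two_mul_add_two_sub _ hr₂0.ne, hx, hx]
    ring
  rw [hseq] at hcs
  have h2top : Tendsto (fun j : ℤ => 2 * j) atTop atTop := tendsto_id.const_mul_atTop' two_pos
  have h2bot : Tendsto (fun j : ℤ => 2 * j) atBot atBot :=
    (tendsto_id.atBot_mul_const' two_pos).congr fun j => mul_comm _ _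
  have hEtop := isLittleO_two_mul_add_two_sub (abs_ne_zero.2 (by linarith)) hFtop h2top
    (tendsto_atTop_add_const_right _ 2 h2top)
  have hEbot := isLittleO_two_mul_add_two_sub (abs_ne_zero.2 hr₂0.ne) hFbot h2bot
    (tendsto_atBot_add_const_right _ 2 h2bot)
  rw [sq_abs] at hEtop hEbot
  have key := hcs.leadingCoeff_mul_pos (sq_pos_of_neg hr₂0) (by linarith)
    (leadingCoeff_ne_zero.1 (hlcA ▸ mul_ne_zero
      (mul_ne_zero (leadingCoeff_ne_zero.2 hA) (by positivity)) (by linarith)))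
    (leadingCoeff_ne_zero.1 (hlcB ▸ mul_ne_zero
      (mul_ne_zero (leadingCoeff_ne_zero.2 hB) (by positivity)) (by linarith)))
    hEtop hEbot
  rw [hlcA, hlcB, hdegB] at key
  refine neg_of_mul_pos_left
    (b := 2 ^ A.natDegree * 2 ^ B.natDegree * ((r₁ ^ 2 - 1) * (r₂ ^ 2 - 1))) ?_
    (mul_nonpos_of_nonneg_of_nonpos (by positivity) (by nlinarith))
  linear_combination key

end Orbit

open Filter Polynomial in
/-- For `x_j = A(j) r₁^j + F(j) + B(j) r₂^j` with `r₁ < -1 < r₂ < 0` and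
`A, B` nonzero, the sequences `(-1)^j (x_{j+1} - x_j)` and `x_{2j+2} - x_{2j}`
cannot both have constant sign over `ℤ`. -/
theorem stmt10 (r₁ r₂ : ℝ) (hr₁ : r₁ < -1) (hr₂ : -1 < r₂) (hr₂0 : r₂ < 0)
    (A B : Polynomial ℝ) (hA : A ≠ 0) (hB : B ≠ 0)
    (F : ℤ → ℝ)
    (hFbot : Tendsto (fun j : ℤ => F j / |r₂| ^ j) atBot (nhds 0))
    (hFtop : Tendsto (fun j : ℤ => F j / |r₁| ^ j) atTop (nhds 0))
    (x : ℤ → ℝ)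
    (hx : ∀ j : ℤ, x j = A.eval (j : ℝ) * r₁ ^ j + F j + B.eval (j : ℝ) * r₂ ^ j) :
    ¬ (ConstSign (fun j : ℤ => (-1 : ℝ) ^ j * (x (j + 1) - x j)) ∧
        ConstSign (fun j : ℤ => x (2 * j + 2) - x (2 * j))) := by
  rintro ⟨hcs₁, hcs₂⟩
  have hFbot' : F =o[atBot] (fun j => |r₂| ^ j) :=
    (isLittleO_iff_tendsto fun j h => absurd h (zpow_ne_zero j (abs_ne_zero.2 hr₂0.ne))).2
      hFbot
  have hFtop' : F =o[atTop] (fun j => |r₁| ^ j) :=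
    (isLittleO_iff_tendsto fun j h => absurd h (zpow_ne_zero j (abs_ne_zero.2 (by linarith)))).2
      hFtop
  have hpos := leadingCoeff_mul_pos_of_constSign_alternating_diff (by linarith) hr₂0 hA hB
    hFbot' hFtop' hx hcs₁
  have hneg := leadingCoeff_mul_neg_of_constSign_even_diff hr₁ hr₂ hr₂0 hA hB
    hFbot' hFtop' hx hcs₂
  exact hpos.not_gt hneg
end

section
/- Let r₁, r₂ ∈ ℝ with r₁ < -1 < r₂ < 0, and suppose x_j = A(j) r₁^j + F(j) with A a nonzero polynomial, and y_j = G(j) + B(j) r₂^j with B a nonzero polynomial, for j ∈ ℤ. Assume F(j)/|r₂|^j → 0 and G(j)/|r₂|^j → 0 as j → -∞, and F(j)/|r₁|^j → 0 and G(j)/|r₁|^j → 0 as j → +∞. Then it is impossible that both (-1)^j(x_j - y_j) and (-1)^j(x_{j+1} - y_j) have constant sign over j ∈ ℤ. -/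
open Filter Polynomial
open Filter Polynomial

lemma int_toNat_tendsto : Tendsto Int.toNat atTop atTop :=
  tendsto_atTop_atTop.mpr fun n => ⟨(n : ℤ), fun j hj => by omega⟩

lemma pow_geo_top (k : ℕ) {q : ℝ} (h0 : 0 ≤ q) (h1 : q < 1) :
    Tendsto (fun j : ℤ => (j : ℝ) ^ k * q ^ j) atTop (nhds 0) := by
  have base : Tendsto (fun n : ℕ => (n : ℝ) ^ k * q ^ n) atTop (nhds 0) :=
    (summable_pow_mul_geometric_of_norm_lt_one (R := ℝ) (r := q) k (by rwa [Real.norm_eq_abs, abs_of_nonneg h0])).tendsto_atTop_zero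
  refine (base.comp int_toNat_tendsto).congr' ?_
  filter_upwards [eventually_ge_atTop (0 : ℤ)] with j hj
  simp only [Function.comp]
  rw [show q ^ j = q ^ (j.toNat : ℤ) by congr 1; omega, zpow_natCast,
    show ((j.toNat : ℝ)) = (j : ℝ) by exact_mod_cast congrArg Int.cast (Int.toNat_of_nonneg hj)]

lemma poly_geo_top (P : Polynomial ℝ) {q : ℝ} (h0 : 0 ≤ q) (h1 : q < 1) :
    Tendsto (fun j : ℤ => P.eval (j : ℝ) * q ^ j) atTop (nhds 0) := by
  have : ∀ j : ℤ, P.eval (j : ℝ) * q ^ j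
      = ∑ i ∈ Finset.range (P.natDegree + 1), P.coeff i * ((j : ℝ) ^ i * q ^ j) := by
    intro j
    rw [eval_eq_sum_range, Finset.sum_mul]
    congr 1 with i
    ring
  simp only [this]
  have := tendsto_finset_sum (Finset.range (P.natDegree + 1))
    (fun i _ => ((pow_geo_top i h0 h1).const_mul (P.coeff i)))
  simpa using this

lemma poly_geo_bot (P : Polynomial ℝ) {q : ℝ} (h1 : 1 < q) :
    Tendsto (fun j : ℤ => P.eval (j : ℝ) * q ^ j) atBot (nhds 0) := by
  have hq0 : 0 < q := lt_trans one_pos h1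
  have h := (poly_geo_top (P.comp (-X)) (le_of_lt (inv_pos.mpr hq0)) (inv_lt_one_of_one_lt₀ h1)).comp
    (tendsto_neg_atBot_atTop (G := ℤ))
  refine h.congr fun j => ?_
  simp only [Function.comp, eval_comp, eval_neg, eval_X]
  push_cast
  rw [neg_neg, zpow_neg, inv_zpow, inv_inv]
open Filter Polynomial
set_option maxRecDepth 4000

lemma poly_div_top (P : Polynomial ℝ) (hP : P ≠ 0) :
    Tendsto (fun x : ℝ => P.eval x / x ^ P.natDegree) atTop (nhds P.leadingCoeff) := by
  have h := div_tendsto_leadingCoeff_div_of_degree_eq P (X ^ P.natDegree : Polynomial ℝ)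
    (by rw [degree_X_pow, degree_eq_natDegree hP])
  simpa [leadingCoeff_X_pow] using h

lemma comp_negX_ne (P : Polynomial ℝ) (hP : P ≠ 0) : P.comp (-X) ≠ 0 ∧
    (P.comp (-X)).leadingCoeff = P.leadingCoeff * (-1) ^ P.natDegree ∧
    (P.comp (-X)).natDegree = P.natDegree := by
  have hdeg : (-X : Polynomial ℝ).natDegree = 1 := by simp
  have hlc : (P.comp (-X)).leadingCoeff = P.leadingCoeff * (-1) ^ P.natDegree := by
    rw [leadingCoeff_comp (by rw [hdeg]; norm_num)]
    simp [hdeg]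
  have hne : P.comp (-X) ≠ 0 := by
    intro h
    apply hP
    rw [← leadingCoeff_eq_zero] at h ⊢
    rw [hlc] at h
    rcases mul_eq_zero.mp h with h | h
    · exact h
    · exact absurd h (by positivity)
  exact ⟨hne, hlc, by rw [natDegree_comp, hdeg, mul_one]⟩

lemma poly_div_bot (P : Polynomial ℝ) (hP : P ≠ 0) :
    Tendsto (fun x : ℝ => P.eval x / x ^ P.natDegree) atBot (nhds P.leadingCoeff) := by
  obtain ⟨hne, hlc, hnd⟩ := comp_negX_ne P hP
  have h := ((poly_div_top (P.comp (-X)) hne).comp (tendsto_neg_atBot_atTop (G := ℝ))).const_mul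
    ((-1 : ℝ) ^ P.natDegree)
  have heq : ∀ x : ℝ, (-1 : ℝ) ^ P.natDegree * ((P.comp (-X)).eval (-x) / (-x) ^ (P.comp (-X)).natDegree)
      = P.eval x / x ^ P.natDegree := by
    intro x
    rw [hnd, eval_comp]
    simp only [eval_neg, eval_X, neg_neg]
    rcases eq_or_ne x 0 with rfl | hx
    · rcases Nat.eq_zero_or_pos P.natDegree with h0 | h0
      · simp [h0]
      · rw [neg_zero, zero_pow h0.ne', div_zero, mul_zero]
    · have h1 : ((-1 : ℝ) ^ P.natDegree) ≠ 0 := pow_ne_zero _ (by norm_num)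
      rw [neg_pow x, div_mul_eq_div_div_swap, mul_comm, div_mul_cancel₀ _ h1]
  have hval : (-1 : ℝ) ^ P.natDegree * (P.comp (-X)).leadingCoeff = P.leadingCoeff := by
    rw [hlc]
    rcases Nat.even_or_odd P.natDegree with he | ho
    · rw [he.neg_one_pow]; ring
    · rw [ho.neg_one_pow]; ring
  rw [← hval]
  exact h.congr heq


lemma abs_neg_one_zpow_real (j : ℤ) : |(-1:ℝ) ^ j| = 1 := by
  rcases Int.even_or_odd j with h | h
  · rw [h.neg_one_zpow, abs_one]
  · rw [h.neg_one_zpow, abs_neg, abs_one]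

lemma abs_zpow' (a : ℝ) (j : ℤ) : |a ^ j| = |a| ^ j := by
  rw [← Real.norm_eq_abs, ← Real.norm_eq_abs, norm_zpow]

lemma bound_div_aux {num t d1 : ℝ} (n : ℕ) (ht : 1 ≤ |t|) (hd1 : 0 < d1) :
    |num / (t ^ n * d1)| ≤ |num| / d1 := by
  have h1 : (1:ℝ) ≤ |t| ^ n := one_le_pow₀ ht
  rw [abs_div, abs_mul, abs_pow, abs_of_pos hd1]
  calc |num| / (|t| ^ n * d1) ≤ |num| / (1 * d1) := by
        apply div_le_div_of_nonneg_left (abs_nonneg _) (by linarith) (by nlinarith)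
    _ = |num| / d1 := by rw [one_mul]

set_option maxHeartbeats 2000000 in
open Filter Polynomial in
/-- For `x_j = A(j) r₁^j + F(j)` and `y_j = G(j) + B(j) r₂^j` with
`r₁ < -1 < r₂ < 0` and `A, B` nonzero, the sequences `(-1)^j (x_j - y_j)` and
`(-1)^j (x_{j+1} - y_j)` cannot both have constant sign over `ℤ`. -/
theorem stmt11 (r₁ r₂ : ℝ) (hr₁ : r₁ < -1) (hr₂ : -1 < r₂) (hr₂0 : r₂ < 0)
    (A B : Polynomial ℝ) (hA : A ≠ 0) (hB : B ≠ 0)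
    (F G : ℤ → ℝ)
    (hFbot : Tendsto (fun j : ℤ => F j / |r₂| ^ j) atBot (nhds 0))
    (hGbot : Tendsto (fun j : ℤ => G j / |r₂| ^ j) atBot (nhds 0))
    (hFtop : Tendsto (fun j : ℤ => F j / |r₁| ^ j) atTop (nhds 0))
    (hGtop : Tendsto (fun j : ℤ => G j / |r₁| ^ j) atTop (nhds 0))
    (x y : ℤ → ℝ)
    (hx : ∀ j : ℤ, x j = A.eval (j : ℝ) * r₁ ^ j + F j)
    (hy : ∀ j : ℤ, y j = G j + B.eval (j : ℝ) * r₂ ^ j) :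
    ¬ (ConstSign (fun j : ℤ => (-1 : ℝ) ^ j * (x j - y j)) ∧
        ConstSign (fun j : ℤ => (-1 : ℝ) ^ j * (x (j + 1) - y j))) := by
  rintro ⟨hu, hv⟩
  set u : ℤ → ℝ := fun j : ℤ => (-1 : ℝ) ^ j * (x j - y j) with hu_def
  set v : ℤ → ℝ := fun j : ℤ => (-1 : ℝ) ^ j * (x (j + 1) - y j) with hv_def
  set s₁ := |r₁| with hs1_def
  set s₂ := |r₂| with hs2_def
  have hr1abs : 1 < s₁ := by rw [hs1_def, abs_of_neg (by linarith)]; linarith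
  have hr10 : (0:ℝ) < s₁ := by linarith
  have hr2abs : s₂ < 1 := by rw [hs2_def, abs_of_neg hr₂0]; linarith
  have hr20 : (0:ℝ) < s₂ := by rw [hs2_def]; exact abs_pos.mpr (ne_of_lt hr₂0)
  have hr1eq : r₁ = -s₁ := by rw [hs1_def, abs_of_neg (by linarith : r₁ < 0)]; ring
  have hr2eq : r₂ = -s₂ := by rw [hs2_def, abs_of_neg hr₂0]; ring
  have hE : ∀ j : ℤ, ((-1:ℝ)) ^ j = 1 ∨ ((-1:ℝ)) ^ j = -1 := fun j =>
    (Int.even_or_odd j).imp (fun h => h.neg_one_zpow) (fun h => h.neg_one_zpow)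
  have hpow1 : ∀ j : ℤ, r₁ ^ j = (-1:ℝ) ^ j * s₁ ^ j := by
    intro j; rw [hr1eq, neg_eq_neg_one_mul, mul_zpow]
  have hpow2 : ∀ j : ℤ, r₂ ^ j = (-1:ℝ) ^ j * s₂ ^ j := by
    intro j; rw [hr2eq, neg_eq_neg_one_mul, mul_zpow]
  have ha : A.leadingCoeff ≠ 0 := leadingCoeff_ne_zero.mpr hA
  have hb : B.leadingCoeff ≠ 0 := leadingCoeff_ne_zero.mpr hB
  -- shifted polynomial As(z) = A(z+1)
  set As := A.comp (X + C 1) with hAs_def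
  have hAs_nd : As.natDegree = A.natDegree := by
    rw [hAs_def, natDegree_comp, natDegree_X_add_C, mul_one]
  have hAs_lc : As.leadingCoeff = A.leadingCoeff := by
    rw [hAs_def, leadingCoeff_comp (by rw [natDegree_X_add_C]; norm_num),
      (monic_X_add_C (1:ℝ)).leadingCoeff, one_pow, mul_one]
  have hAs_ne : As ≠ 0 := fun h => ha (by rw [← hAs_lc, h, leadingCoeff_zero])
  have hAs_ev : ∀ z : ℝ, As.eval z = A.eval (z + 1) := fun z => by
    rw [hAs_def, eval_comp]; simp
  -- denominators
  set c : ℤ → ℝ := fun j : ℤ => (j:ℝ) ^ A.natDegree * s₁ ^ j with hc_def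
  set e : ℤ → ℝ := fun j : ℤ => (j:ℝ) ^ B.natDegree * s₂ ^ j with he_def
  ---- atTop limits ----
  have t1 : Tendsto (fun j : ℤ => A.eval (j:ℝ) / (j:ℝ) ^ A.natDegree) atTop
      (nhds A.leadingCoeff) := (poly_div_top A hA).comp tendsto_intCast_atTop_atTop
  have t1' : Tendsto (fun j : ℤ => A.eval ((j:ℝ)+1) / (j:ℝ) ^ A.natDegree) atTop
      (nhds A.leadingCoeff) := by
    have h := (poly_div_top As hAs_ne).comp tendsto_intCast_atTop_atTop
    rw [hAs_nd, hAs_lc] at h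
    exact h.congr fun j => by rw [Function.comp, hAs_ev]
  have hT2 : Tendsto (fun j : ℤ => ((-1:ℝ) ^ j * (F j - G j)) / c j) atTop (nhds 0) := by
    refine squeeze_zero_norm' ?_ (a := fun j : ℤ => |F j / s₁ ^ j| + |G j / s₁ ^ j|) ?_
    · filter_upwards [eventually_ge_atTop (1:ℤ)] with j hj
      have hj1 : (1:ℝ) ≤ |(j:ℝ)| := by
        rw [abs_of_pos (by exact_mod_cast hj : (0:ℝ) < (j:ℝ))]; exact_mod_cast hj
      have hr : (0:ℝ) < s₁ ^ j := zpow_pos hr10 j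
      rw [Real.norm_eq_abs, hc_def]
      calc |((-1:ℝ) ^ j * (F j - G j)) / ((j:ℝ) ^ A.natDegree * s₁ ^ j)|
          ≤ |(-1:ℝ) ^ j * (F j - G j)| / s₁ ^ j := bound_div_aux _ hj1 hr
        _ = |F j - G j| / s₁ ^ j := by rw [abs_mul, abs_neg_one_zpow, one_mul]
        _ ≤ (|F j| + |G j|) / s₁ ^ j := by gcongr; exact abs_sub _ _
        _ = |F j / s₁ ^ j| + |G j / s₁ ^ j| := by
            rw [abs_div, abs_div, abs_of_pos hr, add_div]
    · simpa using hFtop.abs.add hGtop.abs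
  have hT2' : Tendsto (fun j : ℤ => ((-1:ℝ) ^ j * (F (j+1) - G j)) / c j) atTop (nhds 0) := by
    refine squeeze_zero_norm' ?_
      (a := fun j : ℤ => s₁ * |F (j+1) / s₁ ^ (j+1)| + |G j / s₁ ^ j|) ?_
    · filter_upwards [eventually_ge_atTop (1:ℤ)] with j hj
      have hj1 : (1:ℝ) ≤ |(j:ℝ)| := by
        rw [abs_of_pos (by exact_mod_cast hj : (0:ℝ) < (j:ℝ))]; exact_mod_cast hj
      have hr : (0:ℝ) < s₁ ^ j := zpow_pos hr10 j
      have hr' : (0:ℝ) < s₁ ^ (j+1) := zpow_pos hr10 _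
      have hstep : |F (j+1)| / s₁ ^ j = s₁ * (|F (j+1)| / s₁ ^ (j+1)) := by
        rw [zpow_add_one₀ (ne_of_gt hr10)]
        rw [eq_comm, div_mul_eq_div_div, mul_comm, div_mul_cancel₀ _ (ne_of_gt hr10)]
      rw [Real.norm_eq_abs, hc_def]
      calc |((-1:ℝ) ^ j * (F (j+1) - G j)) / ((j:ℝ) ^ A.natDegree * s₁ ^ j)|
          ≤ |(-1:ℝ) ^ j * (F (j+1) - G j)| / s₁ ^ j := bound_div_aux _ hj1 hr
        _ = |F (j+1) - G j| / s₁ ^ j := by rw [abs_mul, abs_neg_one_zpow, one_mul]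
        _ ≤ (|F (j+1)| + |G j|) / s₁ ^ j := by gcongr; exact abs_sub _ _
        _ = s₁ * (|F (j+1)| / s₁ ^ (j+1)) + |G j| / s₁ ^ j := by rw [add_div, hstep]
        _ = s₁ * |F (j+1) / s₁ ^ (j+1)| + |G j / s₁ ^ j| := by
            rw [abs_div, abs_div, abs_of_pos hr, abs_of_pos hr']
    · have hsh : Tendsto (fun j : ℤ => F (j+1) / s₁ ^ (j+1)) atTop (nhds 0) :=
        hFtop.comp (tendsto_atTop_add_const_right _ 1 tendsto_id)
      simpa using (hsh.abs.const_mul s₁).add hGtop.abs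
  have hq0 : (0:ℝ) ≤ s₂ / s₁ := by positivity
  have hq1 : s₂ / s₁ < 1 := (div_lt_one hr10).mpr (by linarith)
  have hT3 : Tendsto (fun j : ℤ => ((-1:ℝ) ^ j * (B.eval (j:ℝ) * r₂ ^ j)) / c j)
      atTop (nhds 0) := by
    refine squeeze_zero_norm' ?_ (a := fun j : ℤ => |B.eval (j:ℝ) * (s₂ / s₁) ^ j|) ?_
    · filter_upwards [eventually_ge_atTop (1:ℤ)] with j hj
      have hj1 : (1:ℝ) ≤ |(j:ℝ)| := by
        rw [abs_of_pos (by exact_mod_cast hj : (0:ℝ) < (j:ℝ))]; exact_mod_cast hj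
      have hr : (0:ℝ) < s₁ ^ j := zpow_pos hr10 j
      rw [Real.norm_eq_abs, hc_def]
      calc |((-1:ℝ) ^ j * (B.eval (j:ℝ) * r₂ ^ j)) / ((j:ℝ) ^ A.natDegree * s₁ ^ j)|
          ≤ |(-1:ℝ) ^ j * (B.eval (j:ℝ) * r₂ ^ j)| / s₁ ^ j := bound_div_aux _ hj1 hr
        _ = |B.eval (j:ℝ)| * s₂ ^ j / s₁ ^ j := by
            rw [abs_mul, abs_neg_one_zpow, one_mul, abs_mul, abs_zpow', ← hs2_def]
        _ = |B.eval (j:ℝ) * (s₂ / s₁) ^ j| := by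
            rw [abs_mul, abs_zpow', abs_of_nonneg hq0, div_zpow, mul_div_assoc]
    · simpa using (poly_geo_top B hq0 hq1).abs
  -- decomposition identities atTop
  have key1 : (fun j : ℤ => u j / c j) =ᶠ[atTop] fun j : ℤ =>
      A.eval (j:ℝ) / (j:ℝ) ^ A.natDegree +
        (((-1:ℝ) ^ j * (F j - G j)) / c j - ((-1:ℝ) ^ j * (B.eval (j:ℝ) * r₂ ^ j)) / c j) := by
    filter_upwards [eventually_ge_atTop (1:ℤ)] with j hj
    have hj0 : ((j:ℝ)) ≠ 0 := by
      exact_mod_cast (by omega : (j:ℤ) ≠ 0)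
    have hjn : ((j:ℝ)) ^ A.natDegree ≠ 0 := pow_ne_zero _ hj0
    have hrn : s₁ ^ j ≠ 0 := (zpow_pos hr10 j).ne'
    simp only [hu_def, hc_def, hx j, hy j, hpow1 j]
    rcases hE j with h | h <;> rw [h] <;> field_simp <;> ring
  have key2 : (fun j : ℤ => v j / c j) =ᶠ[atTop] fun j : ℤ =>
      -(s₁ * (A.eval ((j:ℝ)+1) / (j:ℝ) ^ A.natDegree)) +
        (((-1:ℝ) ^ j * (F (j+1) - G j)) / c j - ((-1:ℝ) ^ j * (B.eval (j:ℝ) * r₂ ^ j)) / c j) := by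
    filter_upwards [eventually_ge_atTop (1:ℤ)] with j hj
    have hj0 : ((j:ℝ)) ≠ 0 := by
      exact_mod_cast (by omega : (j:ℤ) ≠ 0)
    have hjn : ((j:ℝ)) ^ A.natDegree ≠ 0 := pow_ne_zero _ hj0
    have hrn : s₁ ^ j ≠ 0 := (zpow_pos hr10 j).ne'
    have hr1ne : r₁ ≠ 0 := by linarith
    simp only [hv_def, hc_def, hx (j+1), hy j]
    push_cast
    rw [zpow_add_one₀ hr1ne, hpow1 j, hr1eq]
    rcases hE j with h | h <;> rw [h] <;> field_simp <;> ring
  have hU : Tendsto (fun j : ℤ => u j / c j) atTop (nhds A.leadingCoeff) := by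
    have h := t1.add (hT2.sub hT3)
    rw [show A.leadingCoeff + ((0:ℝ) - 0) = A.leadingCoeff by ring] at h
    exact h.congr' key1.symm
  have hV : Tendsto (fun j : ℤ => v j / c j) atTop (nhds (-(s₁ * A.leadingCoeff))) := by
    have h := ((t1'.const_mul s₁).neg).add (hT2'.sub hT3)
    rw [show -(s₁ * A.leadingCoeff) + ((0:ℝ) - 0) = -(s₁ * A.leadingCoeff) by ring] at h
    exact h.congr' key2.symm
  ---- atBot limits ----
  have hQ1 : (1:ℝ) < s₁ / s₂ := (one_lt_div hr20).mpr (by linarith)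
  have tb : Tendsto (fun j : ℤ => B.eval (j:ℝ) / (j:ℝ) ^ B.natDegree) atBot
      (nhds B.leadingCoeff) :=
    (poly_div_bot B hB).comp (tendsto_intCast_atBot_iff.mpr tendsto_id)
  have hS1 : Tendsto (fun j : ℤ => ((-1:ℝ) ^ j * (A.eval (j:ℝ) * r₁ ^ j)) / e j)
      atBot (nhds 0) := by
    refine squeeze_zero_norm' ?_ (a := fun j : ℤ => |A.eval (j:ℝ) * (s₁ / s₂) ^ j|) ?_
    · filter_upwards [eventually_le_atBot (-1:ℤ)] with j hj
      have hj1 : (1:ℝ) ≤ |(j:ℝ)| := by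
        rw [abs_of_neg (by exact_mod_cast (by omega : j < 0) : (j:ℝ) < 0)]
        have : (j:ℝ) ≤ -1 := by exact_mod_cast hj
        linarith
      have hr : (0:ℝ) < s₂ ^ j := zpow_pos hr20 j
      rw [Real.norm_eq_abs, he_def]
      calc |((-1:ℝ) ^ j * (A.eval (j:ℝ) * r₁ ^ j)) / ((j:ℝ) ^ B.natDegree * s₂ ^ j)|
          ≤ |(-1:ℝ) ^ j * (A.eval (j:ℝ) * r₁ ^ j)| / s₂ ^ j := bound_div_aux _ hj1 hr
        _ = |A.eval (j:ℝ)| * s₁ ^ j / s₂ ^ j := by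
            rw [abs_mul, abs_neg_one_zpow, one_mul, abs_mul, abs_zpow', ← hs1_def]
        _ = |A.eval (j:ℝ) * (s₁ / s₂) ^ j| := by
            rw [abs_mul, abs_zpow', abs_of_nonneg (by positivity : (0:ℝ) ≤ s₁ / s₂),
              div_zpow, mul_div_assoc]
    · simpa using (poly_geo_bot A hQ1).abs
  have hS1' : Tendsto (fun j : ℤ => ((-1:ℝ) ^ j * (A.eval ((j:ℝ)+1) * r₁ ^ (j+1))) / e j)
      atBot (nhds 0) := by
    refine squeeze_zero_norm' ?_ (a := fun j : ℤ => s₁ * |As.eval (j:ℝ) * (s₁ / s₂) ^ j|) ?_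
    · filter_upwards [eventually_le_atBot (-1:ℤ)] with j hj
      have hj1 : (1:ℝ) ≤ |(j:ℝ)| := by
        rw [abs_of_neg (by exact_mod_cast (by omega : j < 0) : (j:ℝ) < 0)]
        have : (j:ℝ) ≤ -1 := by exact_mod_cast hj
        linarith
      have hr : (0:ℝ) < s₂ ^ j := zpow_pos hr20 j
      have hr1' : (0:ℝ) < s₁ ^ j := zpow_pos hr10 j
      rw [Real.norm_eq_abs, he_def]
      calc |((-1:ℝ) ^ j * (A.eval ((j:ℝ)+1) * r₁ ^ (j+1))) / ((j:ℝ) ^ B.natDegree * s₂ ^ j)|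
          ≤ |(-1:ℝ) ^ j * (A.eval ((j:ℝ)+1) * r₁ ^ (j+1))| / s₂ ^ j := bound_div_aux _ hj1 hr
        _ = |A.eval ((j:ℝ)+1)| * (s₁ ^ j * s₁) / s₂ ^ j := by
            rw [abs_mul, abs_neg_one_zpow, one_mul, abs_mul, abs_zpow', ← hs1_def,
              zpow_add_one₀ (ne_of_gt hr10)]
        _ = s₁ * (|A.eval ((j:ℝ)+1)| * (s₁ / s₂) ^ j) := by
            rw [div_zpow]; field_simp
        _ = s₁ * |As.eval (j:ℝ) * (s₁ / s₂) ^ j| := by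
            rw [abs_mul, abs_zpow', abs_of_nonneg (by positivity : (0:ℝ) ≤ s₁ / s₂), hAs_ev]
    · simpa using ((poly_geo_bot As hQ1).abs.const_mul s₁)
  have hS2 : Tendsto (fun j : ℤ => ((-1:ℝ) ^ j * (F j - G j)) / e j) atBot (nhds 0) := by
    refine squeeze_zero_norm' ?_ (a := fun j : ℤ => |F j / s₂ ^ j| + |G j / s₂ ^ j|) ?_
    · filter_upwards [eventually_le_atBot (-1:ℤ)] with j hj
      have hj1 : (1:ℝ) ≤ |(j:ℝ)| := by
        rw [abs_of_neg (by exact_mod_cast (by omega : j < 0) : (j:ℝ) < 0)]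
        have : (j:ℝ) ≤ -1 := by exact_mod_cast hj
        linarith
      have hr : (0:ℝ) < s₂ ^ j := zpow_pos hr20 j
      rw [Real.norm_eq_abs, he_def]
      calc |((-1:ℝ) ^ j * (F j - G j)) / ((j:ℝ) ^ B.natDegree * s₂ ^ j)|
          ≤ |(-1:ℝ) ^ j * (F j - G j)| / s₂ ^ j := bound_div_aux _ hj1 hr
        _ = |F j - G j| / s₂ ^ j := by rw [abs_mul, abs_neg_one_zpow, one_mul]
        _ ≤ (|F j| + |G j|) / s₂ ^ j := by gcongr; exact abs_sub _ _
        _ = |F j / s₂ ^ j| + |G j / s₂ ^ j| := by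
            rw [abs_div, abs_div, abs_of_pos hr, add_div]
    · simpa using hFbot.abs.add hGbot.abs
  have hS2' : Tendsto (fun j : ℤ => ((-1:ℝ) ^ j * (F (j+1) - G j)) / e j) atBot (nhds 0) := by
    refine squeeze_zero_norm' ?_
      (a := fun j : ℤ => s₂ * |F (j+1) / s₂ ^ (j+1)| + |G j / s₂ ^ j|) ?_
    · filter_upwards [eventually_le_atBot (-1:ℤ)] with j hj
      have hj1 : (1:ℝ) ≤ |(j:ℝ)| := by
        rw [abs_of_neg (by exact_mod_cast (by omega : j < 0) : (j:ℝ) < 0)]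
        have : (j:ℝ) ≤ -1 := by exact_mod_cast hj
        linarith
      have hr : (0:ℝ) < s₂ ^ j := zpow_pos hr20 j
      have hr' : (0:ℝ) < s₂ ^ (j+1) := zpow_pos hr20 _
      have hstep : |F (j+1)| / s₂ ^ j = s₂ * (|F (j+1)| / s₂ ^ (j+1)) := by
        rw [zpow_add_one₀ (ne_of_gt hr20)]
        rw [eq_comm, div_mul_eq_div_div, mul_comm, div_mul_cancel₀ _ (ne_of_gt hr20)]
      rw [Real.norm_eq_abs, he_def]
      calc |((-1:ℝ) ^ j * (F (j+1) - G j)) / ((j:ℝ) ^ B.natDegree * s₂ ^ j)|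
          ≤ |(-1:ℝ) ^ j * (F (j+1) - G j)| / s₂ ^ j := bound_div_aux _ hj1 hr
        _ = |F (j+1) - G j| / s₂ ^ j := by rw [abs_mul, abs_neg_one_zpow, one_mul]
        _ ≤ (|F (j+1)| + |G j|) / s₂ ^ j := by gcongr; exact abs_sub _ _
        _ = s₂ * (|F (j+1)| / s₂ ^ (j+1)) + |G j| / s₂ ^ j := by rw [add_div, hstep]
        _ = s₂ * |F (j+1) / s₂ ^ (j+1)| + |G j / s₂ ^ j| := by
            rw [abs_div, abs_div, abs_of_pos hr, abs_of_pos hr']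
    · have hsh : Tendsto (fun j : ℤ => F (j+1) / s₂ ^ (j+1)) atBot (nhds 0) :=
        hFbot.comp (tendsto_atBot_add_const_right _ 1 tendsto_id)
      simpa using (hsh.abs.const_mul s₂).add hGbot.abs
  have key3 : (fun j : ℤ => u j / e j) =ᶠ[atBot] fun j : ℤ =>
      ((-1:ℝ) ^ j * (A.eval (j:ℝ) * r₁ ^ j)) / e j +
        (((-1:ℝ) ^ j * (F j - G j)) / e j - B.eval (j:ℝ) / (j:ℝ) ^ B.natDegree) := by
    filter_upwards [eventually_le_atBot (-1:ℤ)] with j hj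
    have hj0 : ((j:ℝ)) ≠ 0 := by
      exact_mod_cast (by omega : (j:ℤ) ≠ 0)
    have hjn : ((j:ℝ)) ^ B.natDegree ≠ 0 := pow_ne_zero _ hj0
    have hrn : s₂ ^ j ≠ 0 := (zpow_pos hr20 j).ne'
    simp only [hu_def, he_def, hx j, hy j, hpow2 j]
    rcases hE j with h | h <;> rw [h] <;> field_simp <;> ring
  have key4 : (fun j : ℤ => v j / e j) =ᶠ[atBot] fun j : ℤ =>
      ((-1:ℝ) ^ j * (A.eval ((j:ℝ)+1) * r₁ ^ (j+1))) / e j +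
        (((-1:ℝ) ^ j * (F (j+1) - G j)) / e j - B.eval (j:ℝ) / (j:ℝ) ^ B.natDegree) := by
    filter_upwards [eventually_le_atBot (-1:ℤ)] with j hj
    have hj0 : ((j:ℝ)) ≠ 0 := by
      exact_mod_cast (by omega : (j:ℤ) ≠ 0)
    have hjn : ((j:ℝ)) ^ B.natDegree ≠ 0 := pow_ne_zero _ hj0
    have hrn : s₂ ^ j ≠ 0 := (zpow_pos hr20 j).ne'
    simp only [hv_def, he_def, hx (j+1), hy j, hpow2 j]
    push_cast
    rcases hE j with h | h <;> rw [h] <;> field_simp <;> ring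
  have hU' : Tendsto (fun j : ℤ => u j / e j) atBot (nhds (-B.leadingCoeff)) := by
    have h := hS1.add (hS2.sub tb)
    rw [show (0:ℝ) + (0 - B.leadingCoeff) = -B.leadingCoeff by ring] at h
    exact h.congr' key3.symm
  have hV' : Tendsto (fun j : ℤ => v j / e j) atBot (nhds (-B.leadingCoeff)) := by
    have h := hS1'.add (hS2'.sub tb)
    rw [show (0:ℝ) + (0 - B.leadingCoeff) = -B.leadingCoeff by ring] at h
    exact h.congr' key4.symm
  ---- contradiction ----
  have hprodT := hU.mul hV
  have hnegT : A.leadingCoeff * -(s₁ * A.leadingCoeff) < 0 := by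
    nlinarith [mul_self_pos.mpr ha, hr10]
  have hET : ∀ᶠ j : ℤ in atTop, u j * v j < 0 := by
    filter_upwards [hprodT.eventually_lt_const hnegT, eventually_ge_atTop (1:ℤ)] with j h1 h2
    have hjpos : (0:ℝ) < (j:ℝ) := by exact_mod_cast h2
    have hc0 : 0 < c j := by
      rw [hc_def]
      have := zpow_pos hr10 j
      positivity
    rw [div_mul_div_comm] at h1
    by_contra hcon
    push_neg at hcon
    exact absurd (div_nonneg hcon (mul_pos hc0 hc0).le) (not_le.mpr h1)
  have hprodB := hU'.mul hV'
  have hposB : (0:ℝ) < -B.leadingCoeff * -B.leadingCoeff := by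
    nlinarith [mul_self_pos.mpr hb]
  have hEB : ∀ᶠ j : ℤ in atBot, 0 < u j * v j := by
    filter_upwards [hprodB.eventually_const_lt hposB, eventually_le_atBot (-1:ℤ)] with j h1 h2
    have hj0 : ((j:ℝ)) ≠ 0 := by exact_mod_cast (by omega : (j:ℤ) ≠ 0)
    have he0 : e j ≠ 0 := by
      rw [he_def]
      exact mul_ne_zero (pow_ne_zero _ hj0) (zpow_pos hr20 j).ne'
    rw [div_mul_div_comm] at h1
    have he2 : 0 < e j * e j := mul_self_pos.mpr he0
    have h3 : u j * v j = u j * v j / (e j * e j) * (e j * e j) :=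
      (div_mul_cancel₀ _ he2.ne').symm
    rw [h3]
    exact mul_pos h1 he2
  obtain ⟨j₁, hj₁⟩ := hET.exists
  obtain ⟨j₂, hj₂⟩ := hEB.exists
  rcases hu with hu | hu <;> rcases hv with hv | hv
  · exact absurd (mul_nonneg (hu j₁) (hv j₁)) (not_le.mpr hj₁)
  · nlinarith [hu j₂, hv j₂]
  · nlinarith [hu j₂, hv j₂]
  · nlinarith [hu j₁, hv j₁]
end

section
/- Main theorem: Let f : I → I be a continuous surjection on a real interval I satisfying aₙ fⁿ(x) + ... + a₁ f(x) + a₀ x = 0 for all x ∈ I, where the characteristic polynomial aₙ rⁿ + ... + a₀ has real roots r₁ and r₂ (of multiplicities k₁, k₂) with r₁ < -1 < r₂ < 0, and all other roots λ₁,...,λ_p satisfy |r₂| < |λ_i| < |r₁|. Then f satisfies the lower-order equation whose characteristic polynomial has roots exactly {r_i (multiplicity k_i), λ₁ (mult. l₁), ..., λ_p (mult. l_p)} for i = 1 or for i = 2 (i.e., one of the two negative roots can be eliminated, uniformly in x). -/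
/-!
The equation forces `f` to be injective (as `a₀ ≠ 0`), hence a bijection of `I`, so every
`x ∈ I` lies on a bi-infinite orbit `u : ℤ → I`, and along it the equation is the linear
recurrence `P(S) u = 0`, with `P` the characteristic polynomial and `S` the shift. Splitting
`ker P(S)` along coprime factors, `u = w₁ + w₂ + w₃` with `(S - r₁)^k₁ w₁ = 0`,
`(S - r₂)^k₂ w₂ = 0` and `Q(S) w₃ = 0`. If `w₁ ≠ 0` the root `r₁ < -1` dominates as `m → +∞`,
so `u` tends to `+∞` along one parity class of the forward orbit; if `w₂ ≠ 0` the root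
`r₂ ∈ (-1, 0)` dominates as `m → -∞`, with the same effect on the backward orbit. As a
continuous injection of an interval, `f` is strictly monotone, so `g = f ∘ f` is monotone, and a
monotone `g` cannot have both a sequence `x j → +∞` with `g (x j) = x (j + 1)` and a sequence
`y i → +∞` with `g (y (i + 1)) = y i`. Hence `w₂ = 0` on every orbit or `w₁ = 0` on every
orbit: these are the two reduced equations.
-/

open Polynomial Filter Topology

namespace IterativeEquation

section Shift

variable (M R : Type*) [AddMonoidWithOne M] [CommSemiring R]

def seqShift : Module.End R (M → R) := LinearMap.funLeft R R (· + 1)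

variable {M R}

theorem seqShift_pow_apply (u : M → R) (k : ℕ) (m : M) :
    (seqShift M R ^ k) u m = u (m + k) := by
  induction k generalizing u with
  | zero => simp
  | succ k ih =>
    rw [pow_succ, Module.End.mul_apply, ih]
    simp [seqShift, LinearMap.funLeft_apply, add_assoc]

theorem aeval_seqShift_apply {p : R[X]} {N : ℕ} (hN : p.natDegree < N) (u : M → R) (m : M) :
    aeval (seqShift M R) p u m = ∑ k ∈ Finset.range N, p.coeff k * u (m + k) := by
  simp [aeval_eq_sum_range' hN, seqShift_pow_apply]

theorem aeval_X_sub_C_seqShift_apply {R : Type*} [CommRing R] (c : R) (u : M → R) (m : M) :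
    aeval (seqShift M R) (X - C c) u m = u (m + 1) - c * u m := by
  simp [seqShift, LinearMap.funLeft_apply]

theorem aeval_seqShift_map {S : Type*} [CommSemiring S] (φ : R →+* S) (p : R[X]) (u : M → R) :
    aeval (seqShift M S) (p.map φ) (φ ∘ u) = φ ∘ aeval (seqShift M R) p u := by
  have hN : (p.map φ).natDegree < p.natDegree + 1 := Nat.lt_succ_of_le (natDegree_map_le)
  ext m
  simp [aeval_seqShift_apply hN, aeval_seqShift_apply (Nat.lt_succ_self _), map_sum]

theorem aeval_seqShift_of_iterate {p : R[X]} {N : ℕ} (hN : p.natDegree < N) {f : R → R}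
    {u : M → R} (hu : ∀ m (k : ℕ), u (m + k) = f^[k] (u m)) (m : M) :
    aeval (seqShift M R) p u m = ∑ k ∈ Finset.range N, p.coeff k * f^[k] (u m) := by
  simp only [aeval_seqShift_apply hN, hu]

end Shift

theorem exists_add_of_aeval_mul_eq_zero {R V : Type*} [CommRing R] [AddCommGroup V] [Module R V]
    {T : Module.End R V} {p q : R[X]} (hpq : IsCoprime p q) {v : V}
    (hv : aeval T (p * q) v = 0) (hqv : aeval T q v ≠ 0) :
    ∃ w e, aeval T p w = 0 ∧ w ≠ 0 ∧ aeval T q e = 0 ∧ v = w + e := by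
  rw [← LinearMap.mem_ker, ← sup_ker_aeval_eq_ker_aeval_mul_of_coprime T hpq,
    Submodule.mem_sup] at hv
  obtain ⟨w, hw, e, he, rfl⟩ := hv
  refine ⟨w, e, hw, ?_, he, rfl⟩
  rintro rfl
  simp_all

section Growth

def HasPowGrowth (ρ : ℝ) (W : ℕ → ℝ) : Prop :=
  ∃ s : ℝ, ∀ᶠ m in atTop, 1 ≤ s * (W m / ρ ^ m)

theorem tendsto_atTop_of_eventually_one_le_sub {v : ℕ → ℝ}
    (h : ∀ᶠ m in atTop, 1 ≤ v (m + 1) - v m) : Tendsto v atTop atTop := by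
  obtain ⟨N, hN⟩ := eventually_atTop.1 h
  have key : ∀ k : ℕ, v N + k ≤ v (k + N) := by
    intro k
    induction k with
    | zero => simp
    | succ k ih =>
      have := hN (k + N) (by omega)
      rw [show k + 1 + N = k + N + 1 by ring]
      push_cast
      linarith
  rw [← tendsto_add_atTop_iff_nat N]
  exact tendsto_atTop_mono key (tendsto_atTop_add_const_left _ _ tendsto_natCast_atTop_atTop)

theorem HasPowGrowth.of_sub {ρ t : ℝ} {W : ℕ → ℝ}
    (h : ∀ᶠ m in atTop, 1 ≤ t * (W (m + 1) / ρ ^ (m + 1) - W m / ρ ^ m)) :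
    HasPowGrowth ρ W :=
  ⟨t, (tendsto_atTop_of_eventually_one_le_sub (v := fun m => t * (W m / ρ ^ m))
    (by simpa only [mul_sub] using h)).eventually_ge_atTop 1⟩

theorem HasPowGrowth.add_of_tendsto {ρ : ℝ} {W E : ℕ → ℝ} (hW : HasPowGrowth ρ W)
    (hE : Tendsto (fun m => E m / ρ ^ m) atTop (𝓝 0)) :
    HasPowGrowth ρ (fun m => W m + E m) := by
  obtain ⟨s, hs⟩ := hW
  have hsE : ∀ᶠ m in atTop, -1 / 2 < s * (E m / ρ ^ m) := by
    simpa using (hE.const_mul s).eventually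
      (eventually_gt_nhds (by norm_num : (-1 / 2 : ℝ) < s * 0))
  refine ⟨2 * s, ?_⟩
  filter_upwards [hs, hsE] with m h1 h2
  rw [add_div]
  linarith

theorem HasPowGrowth.exists_tendsto_atTop {ρ : ℝ} {W : ℕ → ℝ} (hρ : ρ < -1)
    (hW : HasPowGrowth ρ W) : ∃ ε : ℕ, Tendsto (fun j => W (ε + 2 * j)) atTop atTop := by
  obtain ⟨s, hs⟩ := hW
  have hs0 : s ≠ 0 := by
    rintro rfl
    obtain ⟨m, hm⟩ := hs.exists
    norm_num at hm
  -- the parity `ε` is chosen so that `W (ε + 2 * j)` has the sign of `ρ ^ ε / s`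
  obtain ⟨ε, hε⟩ : ∃ ε : ℕ, 0 < ρ ^ ε / s := by
    rcases hs0.lt_or_gt with h | h
    · exact ⟨1, div_pos_of_neg_of_neg (by linarith) h⟩
    · exact ⟨0, by simpa using h⟩
  have hidx : Tendsto (fun j : ℕ => ε + 2 * j) atTop atTop :=
    tendsto_atTop_mono (fun j => by simp only [id]; omega) tendsto_id
  refine ⟨ε, tendsto_atTop_mono' _ ?_
    ((tendsto_pow_atTop_atTop_of_one_lt (by nlinarith : 1 < ρ ^ 2)).const_mul_atTop hε)⟩
  filter_upwards [hidx.eventually hs] with j hj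
  have hρ0 : ρ ≠ 0 := by linarith
  have hW : W (ε + 2 * j) =
      s * (W (ε + 2 * j) / ρ ^ (ε + 2 * j)) * (ρ ^ ε / s * (ρ ^ 2) ^ j) := by
    field_simp
    ring
  rw [hW]
  exact le_mul_of_one_le_left (by positivity) hj

theorem eq_mul_zpow_of_forall_add_one {K : Type*} [Field K] {w : ℤ → K} {r : K} (hr : r ≠ 0)
    (h : ∀ m, w (m + 1) = r * w m) (m : ℤ) : w m = w 0 * r ^ m := by
  induction m using Int.induction_on with
  | zero => simp
  | succ i ih => rw [h, ih, zpow_add_one₀ hr]; ring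
  | pred i ih =>
    have := h (-i - 1)
    rw [sub_add_cancel, ih] at this
    rw [zpow_sub_one₀ hr, ← mul_assoc, this]
    field_simp

theorem hasPowGrowth_of_forall_add_one_eq_mul {r : ℝ} (hr : r ≠ 0) {w : ℤ → ℝ}
    (hw : ∀ m, w (m + 1) = r * w m) (hw0 : w ≠ 0) :
    HasPowGrowth r (fun m : ℕ => w m) ∧ HasPowGrowth r⁻¹ (fun m : ℕ => w (-m)) := by
  have hgeo := eq_mul_zpow_of_forall_add_one hr hw
  have h0 : w 0 ≠ 0 := fun h => hw0 (funext fun m => by simp [hgeo m, h])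
  refine ⟨⟨(w 0)⁻¹, Eventually.of_forall fun m => ?_⟩,
    ⟨(w 0)⁻¹, Eventually.of_forall fun m => ?_⟩⟩
  · dsimp only
    rw [hgeo m, zpow_natCast]
    field_simp
    rfl
  · dsimp only
    rw [hgeo (-m), zpow_neg, zpow_natCast, inv_pow]
    field_simp
    rfl

theorem hasPowGrowth_of_aeval_X_sub_C_pow {r : ℝ} (hr : r ≠ 0) (k : ℕ) {w : ℤ → ℝ}
    (hw : aeval (seqShift ℤ ℝ) ((X - C r) ^ k) w = 0) (hw0 : w ≠ 0) :
    HasPowGrowth r (fun m : ℕ => w m) ∧ HasPowGrowth r⁻¹ (fun m : ℕ => w (-m)) := by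
  induction k generalizing w with
  | zero => simp_all
  | succ k ih =>
    set d := aeval (seqShift ℤ ℝ) (X - C r) w with hd
    have hdw : ∀ m, d m = w (m + 1) - r * w m := aeval_X_sub_C_seqShift_apply r w
    by_cases hd0 : d = 0
    · refine hasPowGrowth_of_forall_add_one_eq_mul hr (fun m => ?_) hw0
      have := hdw m
      rw [hd0, Pi.zero_apply] at this
      linarith
    · have hdk : aeval (seqShift ℤ ℝ) ((X - C r) ^ k) d = 0 := by
        rwa [hd, ← Module.End.mul_apply, ← map_mul, ← pow_succ]
      obtain ⟨⟨s, hs⟩, ⟨s', hs'⟩⟩ := ih hdk hd0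
      constructor
      · refine HasPowGrowth.of_sub (t := s * r) ?_
        filter_upwards [hs] with m hm
        convert hm using 1
        rw [hdw]
        push_cast
        field_simp
        ring
      · refine HasPowGrowth.of_sub (t := -s' * r) ?_
        filter_upwards [(tendsto_add_atTop_nat 1).eventually hs'] with m hm
        convert hm using 1
        rw [hdw]
        push_cast
        rw [show -((m : ℤ) + 1) + 1 = -m by ring]
        simp only [inv_pow, div_inv_eq_mul]
        field_simp
        ring

end Growth

section ErrorBound

theorem exists_norm_le_mul_pow_of_rec {𝕜 : Type*} [NormedDivisionRing 𝕜] {h g : ℕ → 𝕜}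
    {μ : 𝕜} {σ C : ℝ} (hμ : ‖μ‖ < σ) (hrec : ∀ m, h (m + 1) = μ * h m + g m)
    (hg : ∀ m, ‖g m‖ ≤ C * σ ^ m) : ∃ K, ∀ m, ‖h m‖ ≤ K * σ ^ m := by
  have hσ : 0 < σ - ‖μ‖ := sub_pos.2 hμ
  set K := max ‖h 0‖ (C / (σ - ‖μ‖))
  have hCK : C ≤ (σ - ‖μ‖) * K := by
    rw [← div_le_iff₀' hσ]
    exact le_max_right _ _
  refine ⟨K, fun m => ?_⟩
  induction m with
  | zero => simp [K]
  | succ m ih =>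
    have hσm : 0 ≤ σ ^ m := pow_nonneg (by linarith [norm_nonneg μ]) m
    calc ‖h (m + 1)‖ ≤ ‖μ‖ * ‖h m‖ + ‖g m‖ := by
          rw [hrec, ← norm_mul]
          exact norm_add_le _ _
      _ ≤ ‖μ‖ * (K * σ ^ m) + C * σ ^ m := by gcongr; exact hg m
      _ ≤ ‖μ‖ * (K * σ ^ m) + (σ - ‖μ‖) * K * σ ^ m := by gcongr
      _ = K * σ ^ (m + 1) := by ring

variable {𝕜 : Type*} [NormedField 𝕜]

theorem aeval_prod_aeval_X_sub_C_eq_zero {z : 𝕜} {S : Multiset 𝕜} {h : ℤ → 𝕜}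
    (hh : aeval (seqShift ℤ 𝕜) ((z ::ₘ S).map fun z => X - C z).prod h = 0) :
    aeval (seqShift ℤ 𝕜) (S.map fun z => X - C z).prod
      (aeval (seqShift ℤ 𝕜) (X - C z) h) = 0 := by
  rw [Multiset.map_cons, Multiset.prod_cons] at hh
  rwa [← Module.End.mul_apply, ← map_mul, mul_comm]

theorem exists_norm_le_mul_pow_of_aeval_prod {S : Multiset 𝕜} {σ : ℝ}
    (hS : ∀ z ∈ S, ‖z‖ < σ) {h : ℤ → 𝕜}
    (hh : aeval (seqShift ℤ 𝕜) (S.map fun z => X - C z).prod h = 0) :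
    ∃ K, ∀ m : ℕ, ‖h m‖ ≤ K * σ ^ m := by
  induction S using Multiset.induction_on generalizing h with
  | empty => exact ⟨0, by simp_all⟩
  | cons z S ih =>
    obtain ⟨C, hC⟩ := ih (fun w hw => hS w (Multiset.mem_cons_of_mem hw))
      (aeval_prod_aeval_X_sub_C_eq_zero hh)
    refine exists_norm_le_mul_pow_of_rec (h := fun m : ℕ => h m)
      (hS z (Multiset.mem_cons_self _ _)) (fun m => ?_) hC
    rw [aeval_X_sub_C_seqShift_apply]
    push_cast
    ring

theorem exists_norm_neg_le_mul_pow_of_aeval_prod {S : Multiset 𝕜} {τ : ℝ} (hτ : 0 < τ)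
    (hS : ∀ z ∈ S, τ < ‖z‖) {h : ℤ → 𝕜}
    (hh : aeval (seqShift ℤ 𝕜) (S.map fun z => X - C z).prod h = 0) :
    ∃ K, ∀ m : ℕ, ‖h (-m)‖ ≤ K * τ⁻¹ ^ m := by
  induction S using Multiset.induction_on generalizing h with
  | empty => exact ⟨0, by simp_all⟩
  | cons z S ih =>
    set h₁ := aeval (seqShift ℤ 𝕜) (X - C z) h
    obtain ⟨C, hC⟩ := ih (fun w hw => hS w (Multiset.mem_cons_of_mem hw))
      (aeval_prod_aeval_X_sub_C_eq_zero hh)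
    have hz : τ < ‖z‖ := hS z (Multiset.mem_cons_self _ _)
    have hz0 : z ≠ 0 := norm_pos_iff.1 (hτ.trans hz)
    -- read backwards, `h₁ = (S - z) h` says `h (-(m+1)) = z⁻¹ * h (-m) - z⁻¹ * h₁ (-(m+1))`
    refine exists_norm_le_mul_pow_of_rec (h := fun m : ℕ => h (-m)) (μ := z⁻¹)
      (g := fun m : ℕ => -z⁻¹ * h₁ (-(m + 1 : ℕ))) (C := ‖z‖⁻¹ * C * τ⁻¹)
      (by rw [norm_inv]; exact inv_strictAnti₀ hτ hz) (fun m => ?_) (fun m => ?_)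
    · have := aeval_X_sub_C_seqShift_apply z h (-(m + 1 : ℕ))
      push_cast at this ⊢
      rw [show -((m : ℤ) + 1) + 1 = -m by ring] at this
      change h₁ _ = _ at this
      rw [this]
      field_simp
      ring
    · calc ‖-z⁻¹ * h₁ (-(m + 1 : ℕ))‖ ≤ ‖z‖⁻¹ * (C * τ⁻¹ ^ (m + 1)) := by
            rw [norm_mul, norm_neg, norm_inv]
            gcongr
            exact hC (m + 1)
        _ = ‖z‖⁻¹ * C * τ⁻¹ * τ⁻¹ ^ m := by ring

theorem tendsto_div_pow_of_abs_le {E : ℕ → ℝ} {K σ ρ : ℝ}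
    (hE : ∀ m, |E m| ≤ K * σ ^ m) (hσ : 0 ≤ σ) (hσρ : σ < |ρ|) :
    Tendsto (fun m => E m / ρ ^ m) atTop (𝓝 0) := by
  have hρ : 0 < |ρ| := hσ.trans_lt hσρ
  have hgeo := (tendsto_pow_atTop_nhds_zero_of_lt_one (div_nonneg hσ hρ.le)
    ((div_lt_one hρ).2 hσρ)).const_mul K
  rw [mul_zero] at hgeo
  refine squeeze_zero_norm (fun m => ?_) hgeo
  rw [Real.norm_eq_abs, abs_div, abs_pow, div_pow, mul_div_assoc']
  exact div_le_div_of_nonneg_right (hE m) (by positivity)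

end ErrorBound

section Asymptotics

theorem aeval_prod_roots_eq_zero_of_aeval_eq_zero {R : ℝ[X]} (hR : R.Monic) {e : ℤ → ℝ}
    (he : aeval (seqShift ℤ ℝ) R e = 0) :
    aeval (seqShift ℤ ℂ) ((R.map (algebraMap ℝ ℂ)).roots.map fun z => X - C z).prod
      (algebraMap ℝ ℂ ∘ e) = 0 := by
  rw [← (IsAlgClosed.splits _).eq_prod_roots_of_monic (hR.map _), aeval_seqShift_map, he]
  rfl

theorem tendsto_div_pow_of_aeval_eq_zero {R : ℝ[X]} (hR : R.Monic) {ρ : ℝ} (hρ : ρ ≠ 0)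
    (hroots : ∀ z ∈ (R.map (algebraMap ℝ ℂ)).roots, ‖z‖ < |ρ|) {e : ℤ → ℝ}
    (he : aeval (seqShift ℤ ℝ) R e = 0) :
    Tendsto (fun m : ℕ => e m / ρ ^ m) atTop (𝓝 0) := by
  obtain ⟨σ, hσroots, hσ⟩ :
      ∃ σ, (∀ z ∈ (R.map (algebraMap ℝ ℂ)).roots, ‖z‖ < σ) ∧ σ ∈ Set.Ioo 0 |ρ| := by
    have hroots' := (Finset.eventually_all _).2 fun z hz =>
      (eventually_gt_nhds (hroots z (Multiset.mem_toFinset.1 hz))).filter_mono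
        (nhdsWithin_le_nhds (s := Set.Iio |ρ|))
    obtain ⟨σ, h1, h2⟩ := (hroots'.and (Ioo_mem_nhdsLT (abs_pos.2 hρ))).exists
    exact ⟨σ, fun z hz => h1 z (Multiset.mem_toFinset.2 hz), h2⟩
  obtain ⟨K, hK⟩ := exists_norm_le_mul_pow_of_aeval_prod hσroots
    (aeval_prod_roots_eq_zero_of_aeval_eq_zero hR he)
  exact tendsto_div_pow_of_abs_le (fun m => by simpa using hK m) hσ.1.le hσ.2

theorem tendsto_neg_div_inv_pow_of_aeval_eq_zero {R : ℝ[X]} (hR : R.Monic) {ρ : ℝ}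
    (hρ : ρ ≠ 0) (hroots : ∀ z ∈ (R.map (algebraMap ℝ ℂ)).roots, |ρ| < ‖z‖) {e : ℤ → ℝ}
    (he : aeval (seqShift ℤ ℝ) R e = 0) :
    Tendsto (fun m : ℕ => e (-m) / ρ⁻¹ ^ m) atTop (𝓝 0) := by
  obtain ⟨τ, hτroots, hτ⟩ :
      ∃ τ, (∀ z ∈ (R.map (algebraMap ℝ ℂ)).roots, τ < ‖z‖) ∧ |ρ| < τ := by
    have hroots' := (Finset.eventually_all _).2 fun z hz =>
      (eventually_lt_nhds (hroots z (Multiset.mem_toFinset.1 hz))).filter_mono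
        (nhdsWithin_le_nhds (s := Set.Ioi |ρ|))
    obtain ⟨τ, h1, h2⟩ := (hroots'.and self_mem_nhdsWithin).exists
    exact ⟨τ, fun z hz => h1 z (Multiset.mem_toFinset.2 hz), h2⟩
  have hτ0 : 0 < τ := (abs_nonneg ρ).trans_lt hτ
  obtain ⟨K, hK⟩ := exists_norm_neg_le_mul_pow_of_aeval_prod hτ0 hτroots
    (aeval_prod_roots_eq_zero_of_aeval_eq_zero hR he)
  refine tendsto_div_pow_of_abs_le (fun m => by simpa using hK m) (inv_nonneg.2 hτ0.le) ?_
  rw [abs_inv]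
  exact inv_strictAnti₀ (abs_pos.2 hρ) hτ

theorem isCoprime_X_sub_C_pow_of_norm_roots_ne {R : ℝ[X]} (hR : R.Monic) {r : ℝ} (k : ℕ)
    (hroots : ∀ z ∈ (R.map (algebraMap ℝ ℂ)).roots, ‖z‖ ≠ |r|) :
    IsCoprime ((X - C r) ^ k) R := by
  refine IsCoprime.pow_left ((irreducible_X_sub_C r).coprime_iff_not_dvd.2 fun hdvd => ?_)
  refine hroots (algebraMap ℝ ℂ r) ((mem_roots (hR.map _).ne_zero).2 ?_) (by simp)
  rw [IsRoot.def, eval_map_algebraMap, aeval_algebraMap_apply_eq_algebraMap_eval,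
    (dvd_iff_isRoot.1 hdvd).eq_zero, map_zero]

theorem exists_tendsto_atTop_of_aeval_mul_eq_zero {r : ℝ} (hr : r < -1) (k : ℕ) {R : ℝ[X]}
    (hR : R.Monic) (hroots : ∀ z ∈ (R.map (algebraMap ℝ ℂ)).roots, ‖z‖ < |r|)
    {u : ℤ → ℝ}
    (hu : aeval (seqShift ℤ ℝ) ((X - C r) ^ k * R) u = 0)
    (hRu : aeval (seqShift ℤ ℝ) R u ≠ 0) :
    ∃ ε : ℕ, Tendsto (fun j : ℕ => u (ε + 2 * j : ℕ)) atTop atTop := by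
  have hr0 : r ≠ 0 := by linarith
  obtain ⟨w, e, hw, hw0, he, rfl⟩ := exists_add_of_aeval_mul_eq_zero
    (isCoprime_X_sub_C_pow_of_norm_roots_ne hR k fun z hz => (hroots z hz).ne) hu hRu
  exact ((hasPowGrowth_of_aeval_X_sub_C_pow hr0 k hw hw0).1.add_of_tendsto
    (tendsto_div_pow_of_aeval_eq_zero hR hr0 hroots he)).exists_tendsto_atTop hr

theorem exists_tendsto_atTop_neg_of_aeval_mul_eq_zero {r : ℝ} (hr : -1 < r) (hr0 : r < 0)
    (k : ℕ) {R : ℝ[X]} (hR : R.Monic)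
    (hroots : ∀ z ∈ (R.map (algebraMap ℝ ℂ)).roots, |r| < ‖z‖) {u : ℤ → ℝ}
    (hu : aeval (seqShift ℤ ℝ) ((X - C r) ^ k * R) u = 0)
    (hRu : aeval (seqShift ℤ ℝ) R u ≠ 0) :
    ∃ ε : ℕ, Tendsto (fun j : ℕ => u (-(ε + 2 * j : ℕ))) atTop atTop := by
  obtain ⟨w, e, hw, hw0, he, rfl⟩ := exists_add_of_aeval_mul_eq_zero
    (isCoprime_X_sub_C_pow_of_norm_roots_ne hR k fun z hz => (hroots z hz).ne') hu hRu
  refine ((hasPowGrowth_of_aeval_X_sub_C_pow hr0.ne k hw hw0).2.add_of_tendsto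
    (tendsto_neg_div_inv_pow_of_aeval_eq_zero hR hr0.ne hroots he)).exists_tendsto_atTop ?_
  nlinarith [inv_mul_cancel₀ hr0.ne, inv_lt_zero.2 hr0]

end Asymptotics

section Dynamics

theorem strictMonoOn_or_strictAntiOn_of_injOn {α δ : Type*}
    [ConditionallyCompleteLinearOrder α] [TopologicalSpace α] [OrderTopology α]
    [DenselyOrdered α] [LinearOrder δ] [TopologicalSpace δ] [OrderClosedTopology δ]
    {I : Set α} (hI : I.OrdConnected) {f : α → δ}
    (hcont : ContinuousOn f I) (hinj : Set.InjOn f I) : StrictMonoOn f I ∨ StrictAntiOn f I := by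
  -- any two increasing pairs lie in a common subinterval, on which `f` is strictly monotone
  have key : ∀ a ∈ I, ∀ b ∈ I, ∀ x ∈ I, ∀ y ∈ I,
      a < b → x < y → f a < f b → f x < f y := by
    intro a ha b hb x hx y hy hab hxy hfab
    set J := Set.Icc (min a x) (max b y)
    have hsub : J ⊆ I := hI.out (min_rec' _ ha hx) (max_rec' _ hb hy)
    have hamem : a ∈ J := ⟨min_le_left _ _, hab.le.trans (le_max_left _ _)⟩
    have hbmem : b ∈ J := ⟨(min_le_left _ _).trans hab.le, le_max_left _ _⟩
    have hxmem : x ∈ J := ⟨min_le_right _ _, hxy.le.trans (le_max_right _ _)⟩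
    have hymem : y ∈ J := ⟨(min_le_right _ _).trans hxy.le, le_max_right _ _⟩
    rcases (hcont.mono hsub).strictMonoOn_of_injOn_Icc' (hamem.1.trans hamem.2) (hinj.mono hsub)
      with h | h
    · exact h hxmem hymem hxy
    · exact absurd (h hamem hbmem hab) hfab.not_gt
  by_cases h : ∃ a ∈ I, ∃ b ∈ I, a < b ∧ f a < f b
  · obtain ⟨a, ha, b, hb, hab, hfab⟩ := h
    exact Or.inl fun x hx y hy hxy => key a ha b hb x hx y hy hab hxy hfab
  · push Not at h
    exact Or.inr fun x hx y hy hxy =>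
      (h x hx y hy hxy).lt_of_ne fun hfxy => hxy.ne (hinj hx hy hfxy.symm)

theorem monotoneOn_iterate_two_of_injOn {α : Type*} [ConditionallyCompleteLinearOrder α]
    [TopologicalSpace α] [OrderTopology α] [DenselyOrdered α] {I : Set α} (hI : I.OrdConnected)
    {f : α → α}
    (hcont : ContinuousOn f I) (hmap : Set.MapsTo f I I) (hinj : Set.InjOn f I) :
    MonotoneOn f^[2] I := by
  rcases strictMonoOn_or_strictAntiOn_of_injOn hI hcont hinj with h | h
  · exact (h.comp h hmap).monotoneOn
  · exact (h.comp h hmap).monotoneOn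

theorem injOn_of_sum_iterate_eq_zero {R : Type*} [CommRing R] [IsDomain R] {I : Set R}
    {f : R → R} {n : ℕ} {a : ℕ → R} (ha0 : a 0 ≠ 0)
    (h : ∀ x ∈ I, ∑ k ∈ Finset.range (n + 1), a k * f^[k] x = 0) : Set.InjOn f I := by
  intro x hx y hy hxy
  have := (h x hx).trans (h y hy).symm
  simp only [Finset.sum_range_succ', Function.iterate_succ_apply, hxy,
    Function.iterate_zero_apply] at this
  exact mul_left_cancel₀ ha0 (add_left_cancel this)

theorem apply_add_natCast_eq_iterate {M α : Type*} [AddMonoidWithOne M] {f : α → α}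
    {u : M → α} (h : ∀ m, u (m + 1) = f (u m)) (m : M) (k : ℕ) : u (m + k) = f^[k] (u m) := by
  induction k with
  | zero => simp
  | succ k ih => rw [Nat.cast_succ, ← add_assoc, h, ih, Function.iterate_succ_apply']

theorem exists_orbit_of_bijOn {α : Type*} {f : α → α} {I : Set α} (hf : Set.BijOn f I I)
    {x : α} (hx : x ∈ I) :
    ∃ u : ℤ → α, u 0 = x ∧ (∀ m, u m ∈ I) ∧ ∀ m (k : ℕ), u (m + k) = f^[k] (u m) := by
  set u : ℤ → α := fun m => ((hf.equiv f ^ m) ⟨x, hx⟩ : α)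
  refine ⟨u, rfl, fun m => Subtype.prop _, apply_add_natCast_eq_iterate fun m => ?_⟩
  simp only [u, add_comm m, zpow_one_add, Equiv.Perm.mul_apply]
  rfl

theorem false_of_monotoneOn_of_orbits_tendsto_atTop {α : Type*} [LinearOrder α]
    [NoMaxOrder α] {I : Set α} {g : α → α} (hg : MonotoneOn g I) {x y : ℕ → α}
    (hxI : ∀ j, x j ∈ I) (hyI : ∀ i, y i ∈ I) (hxg : ∀ j, g (x j) = x (j + 1))
    (hyg : ∀ i, g (y (i + 1)) = y i) (hx : Tendsto x atTop atTop) (hy : Tendsto y atTop atTop) :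
    False := by
  obtain ⟨j, hyx, hxx⟩ : ∃ j, y 0 ≤ x j ∧ x j < x (j + 1) := by
    by_contra! H
    obtain ⟨N, hN⟩ := eventually_atTop.1 (hx.eventually_ge_atTop (y 0))
    have hle : ∀ k, x (N + k) ≤ x N := by
      intro k
      induction k with
      | zero => rfl
      | succ k ih => exact (H (N + k) (hN _ (by omega))).trans ih
    obtain ⟨M, hM⟩ := eventually_atTop.1 (hx.eventually_gt_atTop (x N))
    exact (hM (N + M) (by omega)).not_ge (hle M)
  have hex : ∃ i, x j < y i := (hy.eventually_gt_atTop (x j)).exists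
  obtain ⟨i, hi⟩ : ∃ i, Nat.find hex = i + 1 :=
    Nat.exists_eq_succ_of_ne_zero fun h0 => (Nat.find_spec hex).not_ge (h0 ▸ hyx)
  have hlt : x j < y (i + 1) := hi ▸ Nat.find_spec hex
  have hle : y i ≤ x j := not_lt.1 (Nat.find_min hex (by omega))
  have := hg (hxI j) (hyI (i + 1)) hlt.le
  rw [hxg, hyg] at this
  exact (this.trans hle).not_gt hxx

end Dynamics

section Equation

variable {R : Type*} [CommRing R] {f : R → R} {I : Set R}

def SolvesCharEq (f : R → R) (I : Set R) (p : R[X]) : Prop :=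
  ∀ x ∈ I, ∑ k ∈ Finset.range (p.natDegree + 1), p.coeff k * f^[k] x = 0

theorem solvesCharEq_iff_of_natDegree_lt {p : R[X]} {N : ℕ} (hN : p.natDegree < N) :
    SolvesCharEq f I p ↔ ∀ x ∈ I, ∑ k ∈ Finset.range N, p.coeff k * f^[k] x = 0 := by
  refine forall₂_congr fun x _ => ?_
  rw [← sum_over_range' p (f := fun k c => c * f^[k] x) (by simp) _ hN,
    sum_over_range' p (by simp) _ (Nat.lt_succ_self _)]

theorem solvesCharEq_C_mul_iff [IsDomain R] {c : R} (hc : c ≠ 0) {p : R[X]} :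
    SolvesCharEq f I (C c * p) ↔ SolvesCharEq f I p := by
  simp only [SolvesCharEq, natDegree_C_mul hc, coeff_C_mul, mul_assoc, ← Finset.mul_sum,
    mul_eq_zero, hc, false_or]

theorem solvesCharEq_sum_C_mul_X_pow_iff {a : ℕ → R} {n : ℕ} :
    SolvesCharEq f I (∑ i ∈ Finset.range (n + 1), C (a i) * X ^ i) ↔
      ∀ x ∈ I, ∑ k ∈ Finset.range (n + 1), a k * f^[k] x = 0 := by
  rw [solvesCharEq_iff_of_natDegree_lt (Nat.lt_succ_of_le
    (natDegree_sum_le_of_forall_le _ _ fun i hi => (natDegree_C_mul_X_pow_le (a i) i).trans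
      (Nat.lt_succ_iff.1 (Finset.mem_range.1 hi))))]
  have hcoeff : ∀ k ∈ Finset.range (n + 1),
      (∑ i ∈ Finset.range (n + 1), C (a i) * X ^ i).coeff k = a k := fun k hk => by
    simp [finsetSum_coeff, hk]
  exact forall₂_congr fun x _ => by rw [Finset.sum_congr rfl fun k hk => by rw [hcoeff k hk]]

theorem aeval_seqShift_eq_zero_of_solvesCharEq {M : Type*} [AddMonoidWithOne M] {p : R[X]}
    (h : SolvesCharEq f I p) {u : M → R} (hI : ∀ m, u m ∈ I)
    (hu : ∀ m (k : ℕ), u (m + k) = f^[k] (u m)) : aeval (seqShift M R) p u = 0 :=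
  funext fun m => (aeval_seqShift_of_iterate (Nat.lt_succ_self _) hu m).trans (h _ (hI m))

theorem SolvesCharEq.mul_left (hmap : Set.MapsTo f I I) {q : R[X]} (h : SolvesCharEq f I q)
    (p : R[X]) : SolvesCharEq f I (p * q) := by
  intro x hx
  have hv : ∀ m (k : ℕ), f^[m + k] x = f^[k] (f^[m] x) := fun m k => by
    rw [add_comm, Function.iterate_add_apply]
  refine (aeval_seqShift_of_iterate (u := fun m => f^[m] x) (Nat.lt_succ_self _) hv 0).symm.trans ?_
  rw [map_mul, Module.End.mul_apply,
    aeval_seqShift_eq_zero_of_solvesCharEq h (fun m => hmap.iterate m hx) hv, map_zero]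
  rfl

theorem exists_orbit_aeval_ne_zero (hf : Set.BijOn f I I) {p : R[X]} (h : ¬SolvesCharEq f I p) :
    ∃ u : ℤ → R, (∀ m, u m ∈ I) ∧ (∀ m (k : ℕ), u (m + k) = f^[k] (u m)) ∧
      aeval (seqShift ℤ R) p u ≠ 0 := by
  obtain ⟨x, hx, hsum⟩ :
      ∃ x ∈ I, ∑ k ∈ Finset.range (p.natDegree + 1), p.coeff k * f^[k] x ≠ 0 := by
    simpa [SolvesCharEq] using h
  obtain ⟨u, rfl, huI, hu⟩ := exists_orbit_of_bijOn hf hx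
  exact ⟨u, huI, hu, fun h0 => hsum
    ((aeval_seqShift_of_iterate (Nat.lt_succ_self _) hu 0).symm.trans (congrFun h0 0))⟩

end Equation

theorem mem_roots_map_X_sub_C_pow_mul {K L : Type*} [Field K] [Field L] (φ : K →+* L) {r : K}
    {k : ℕ} {Q : K[X]} (hQ : Q ≠ 0) {z : L} (hz : z ∈ (((X - C r) ^ k * Q).map φ).roots) :
    z = φ r ∨ z ∈ (Q.map φ).roots := by
  rw [Polynomial.map_mul, Polynomial.map_pow, Polynomial.map_sub, map_X, map_C,
    roots_mul (mul_ne_zero (pow_ne_zero _ (X_sub_C_ne_zero _)) (Polynomial.map_ne_zero hQ)),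
    roots_pow, roots_X_sub_C, Multiset.mem_add] at hz
  exact hz.imp (fun h => Multiset.mem_singleton.1 (Multiset.mem_nsmul.1 h).2) id

theorem SolvesCharEq.or_of_X_sub_C_pow_mul {I : Set ℝ} {f : ℝ → ℝ} (hf : Set.BijOn f I I)
    (hmono : MonotoneOn f^[2] I) {r₁ r₂ : ℝ} (hr₁ : r₁ < -1) (hr₂ : -1 < r₂)
    (hr₂0 : r₂ < 0) {k₁ k₂ : ℕ} {Q : ℝ[X]} (hQ : Q.Monic)
    (hroots : ∀ z ∈ (Q.map (algebraMap ℝ ℂ)).roots, |r₂| < ‖z‖ ∧ ‖z‖ < |r₁|)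
    (h : SolvesCharEq f I ((X - C r₁) ^ k₁ * (X - C r₂) ^ k₂ * Q)) :
    SolvesCharEq f I ((X - C r₁) ^ k₁ * Q) ∨ SolvesCharEq f I ((X - C r₂) ^ k₂ * Q) := by
  have hr : |r₂| < |r₁| := by
    rw [abs_of_neg hr₂0, abs_of_neg (by linarith : r₁ < 0)]
    linarith
  by_contra! ⟨h₁, h₂⟩
  obtain ⟨u, huI, hu, hu0⟩ := exists_orbit_aeval_ne_zero hf h₂
  obtain ⟨ε, hε⟩ := exists_tendsto_atTop_of_aeval_mul_eq_zero hr₁ k₁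
    (((monic_X_sub_C r₂).pow k₂).mul hQ)
    (fun z hz => (mem_roots_map_X_sub_C_pow_mul _ hQ.ne_zero hz).elim
      (fun h => by simpa [h] using hr) fun h => (hroots z h).2)
    (by rw [← mul_assoc]; exact aeval_seqShift_eq_zero_of_solvesCharEq h huI hu) hu0
  obtain ⟨v, hvI, hv, hv0⟩ := exists_orbit_aeval_ne_zero hf h₁
  obtain ⟨ε', hε'⟩ := exists_tendsto_atTop_neg_of_aeval_mul_eq_zero hr₂ hr₂0 k₂
    (((monic_X_sub_C r₁).pow k₁).mul hQ)
    (fun z hz => (mem_roots_map_X_sub_C_pow_mul _ hQ.ne_zero hz).elim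
      (fun h => by simpa [h] using hr) fun h => (hroots z h).1)
    (by rw [mul_left_comm, ← mul_assoc]; exact aeval_seqShift_eq_zero_of_solvesCharEq h hvI hv)
    hv0
  refine false_of_monotoneOn_of_orbits_tendsto_atTop hmono (fun j => huI _) (fun i => hvI _)
    (fun j => ?_) (fun i => ?_) hε hε'
  · rw [← hu]
    congr 1
  · rw [← hv]
    congr 1
    push_cast
    ring

end IterativeEquation

open IterativeEquation

open Polynomial in
theorem stmt12_general (I : Set ℝ) (hI : I.OrdConnected) (n : ℕ)
    (a : ℕ → ℝ) (ha0 : a 0 ≠ 0) (han : a n ≠ 0)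
    (f : ℝ → ℝ) (hmap : Set.MapsTo f I I) (hcont : ContinuousOn f I)
    (hsurj : Set.SurjOn f I I)
    (r₁ r₂ : ℝ) (hr₁ : r₁ < -1) (hr₂ : -1 < r₂) (hr₂0 : r₂ < 0)
    (k₁ k₂ : ℕ)
    (Q : Polynomial ℝ) (hQ : Q.Monic)
    (hfact : (∑ i ∈ Finset.range (n + 1), C (a i) * X ^ i) =
      C (a n) * (X - C r₁) ^ k₁ * (X - C r₂) ^ k₂ * Q)
    (hroots : ∀ z ∈ (Q.map (algebraMap ℝ ℂ)).roots,
      |r₂| < ‖z‖ ∧ ‖z‖ < |r₁|) :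
    (∀ x ∈ I, ∑ k ∈ Finset.range (n + 1), a k * f^[k] x = 0) ↔
      ((∀ x ∈ I, ∑ k ∈ Finset.range (((X - C r₁) ^ k₁ * Q).natDegree + 1),
          ((X - C r₁) ^ k₁ * Q).coeff k * f^[k] x = 0) ∨
       (∀ x ∈ I, ∑ k ∈ Finset.range (((X - C r₂) ^ k₂ * Q).natDegree + 1),
          ((X - C r₂) ^ k₂ * Q).coeff k * f^[k] x = 0)) := by
  have hfull : (∀ x ∈ I, ∑ k ∈ Finset.range (n + 1), a k * f^[k] x = 0) ↔
      SolvesCharEq f I ((X - C r₁) ^ k₁ * (X - C r₂) ^ k₂ * Q) := by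
    rw [← solvesCharEq_sum_C_mul_X_pow_iff, hfact, mul_assoc, mul_assoc,
      solvesCharEq_C_mul_iff han, ← mul_assoc]
  constructor
  · intro h
    have hbij : Set.BijOn f I I := ⟨hmap, injOn_of_sum_iterate_eq_zero ha0 h, hsurj⟩
    exact (hfull.1 h).or_of_X_sub_C_pow_mul hbij
      (monotoneOn_iterate_two_of_injOn hI hcont hmap hbij.injOn) hr₁ hr₂ hr₂0 hQ hroots
  · rintro (h | h) <;> refine hfull.2 ?_
    · convert SolvesCharEq.mul_left hmap h ((X - C r₂) ^ k₂) using 1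
      ring
    · convert SolvesCharEq.mul_left hmap h ((X - C r₁) ^ k₁) using 1
      ring

open Polynomial in
/-- Main theorem: if the characteristic polynomial of the polynomial-like
iterative equation factors as `C (a n) * (X - r₁)^k₁ * (X - r₂)^k₂ * Q` where
`r₁ < -1 < r₂ < 0` and every (complex) root `λ` of `Q` satisfies
`|r₂| < |λ| < |r₁|`, then a continuous surjection `f : I → I` satisfies the
equation iff it satisfies the reduced equation whose characteristic polynomial
is `(X - r₁)^k₁ * Q` or the one whose characteristic polynomial is
`(X - r₂)^k₂ * Q` (uniformly in `x`). -/
theorem stmt12 (I : Set ℝ) (hI : I.OrdConnected) (n : ℕ) (hn : 0 < n)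
    (a : ℕ → ℝ) (ha0 : a 0 ≠ 0) (han : a n ≠ 0)
    (f : ℝ → ℝ) (hmap : Set.MapsTo f I I) (hcont : ContinuousOn f I)
    (hsurj : Set.SurjOn f I I)
    (r₁ r₂ : ℝ) (hr₁ : r₁ < -1) (hr₂ : -1 < r₂) (hr₂0 : r₂ < 0)
    (k₁ k₂ : ℕ) (hk₁ : 0 < k₁) (hk₂ : 0 < k₂)
    (Q : Polynomial ℝ) (hQ : Q.Monic)
    (hfact : (∑ i ∈ Finset.range (n + 1), C (a i) * X ^ i) =
      C (a n) * (X - C r₁) ^ k₁ * (X - C r₂) ^ k₂ * Q)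
    (hroots : ∀ z ∈ (Q.map (algebraMap ℝ ℂ)).roots,
      |r₂| < ‖z‖ ∧ ‖z‖ < |r₁|) :
    (∀ x ∈ I, ∑ k ∈ Finset.range (n + 1), a k * f^[k] x = 0) ↔
      ((∀ x ∈ I, ∑ k ∈ Finset.range (((X - C r₁) ^ k₁ * Q).natDegree + 1),
          ((X - C r₁) ^ k₁ * Q).coeff k * f^[k] x = 0) ∨
       (∀ x ∈ I, ∑ k ∈ Finset.range (((X - C r₂) ^ k₂ * Q).natDegree + 1),
          ((X - C r₂) ^ k₂ * Q).coeff k * f^[k] x = 0)) :=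
  stmt12_general I hI n a ha0 han f hmap hcont hsurj r₁ r₂ hr₁ hr₂ hr₂0 k₁ k₂ Q hQ hfact hroots
end

section
/- If f : ℝ → ℝ is continuous and satisfies aₙ fⁿ(x) + ... + a₁ f(x) + a₀ x = 0 for all x ∈ ℝ with a₀ ≠ 0 and aₙ ≠ 0, then f is bijective. -/
/-- A continuous solution on all of `ℝ` of a polynomial-like iterative
equation with `a 0 ≠ 0` and `a n ≠ 0` is bijective. -/
theorem stmt14 (n : ℕ) (hn : 0 < n) (a : ℕ → ℝ) (ha0 : a 0 ≠ 0) (han : a n ≠ 0)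
    (f : ℝ → ℝ) (hcont : Continuous f)
    (heq : ∀ x : ℝ, ∑ k ∈ Finset.range (n + 1), a k * f^[k] x = 0) :
    Function.Bijective f := by
  set g : ℝ → ℝ := fun y => (-(a 0))⁻¹ * ∑ k ∈ Finset.range n, a (k + 1) * f^[k] y with hgdef
  have hgf : ∀ x, g (f x) = x := by
    intro x
    have h := heq x
    rw [Finset.sum_range_succ'] at h
    simp only [Function.iterate_zero, id_eq] at h
    have hsum : ∑ k ∈ Finset.range n, a (k + 1) * f^[k] (f x)
        = ∑ k ∈ Finset.range n, a (k + 1) * f^[k + 1] x := by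
      refine Finset.sum_congr rfl fun k _ => ?_
      rw [Function.iterate_succ_apply]
    rw [hgdef]
    simp only [hsum]
    have : ∑ k ∈ Finset.range n, a (k + 1) * f^[k + 1] x = -(a 0) * x := by linarith
    rw [this]
    field_simp
  have hgc : Continuous g := by
    exact continuous_const.mul (continuous_finset_sum _ fun k _ =>
      continuous_const.mul (hcont.iterate k))
  have hinj : Function.Injective f := fun x y h => by rw [← hgf x, ← hgf y, h]
  refine ⟨hinj, ?_⟩
  -- key boundedness fact: for any compact interval, g is bounded there
  have key : ∀ c d : ℝ, ∃ C, ∀ y ∈ Set.Icc c d, |g y| ≤ C := by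
    intro c d
    obtain ⟨C, hC⟩ := isCompact_Icc.exists_bound_of_continuousOn (hgc.continuousOn (s := Set.Icc c d))
    exact ⟨C, fun y hy => by simpa using hC y hy⟩
  -- range of f is unbounded above
  have hub : ∀ b : ℝ, ∃ x, b ≤ f x := by
    intro b
    by_contra h
    push_neg at h
    rcases hcont.strictMono_of_inj hinj with hm | hm
    · -- increasing bounded above: f x ∈ [f 0, b] for x ≥ 0
      obtain ⟨C, hC⟩ := key (f 0) b
      have : ∀ x : ℝ, 0 ≤ x → x ≤ C := by
        intro x hx
        have h1 : f x ∈ Set.Icc (f 0) b := ⟨hm.monotone hx, (h x).le⟩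
        have := hC (f x) h1
        rw [hgf x] at this
        exact (abs_le.mp this).2
      have := this (max C 0 + 1) (by positivity)
      have h2 : C ≤ max C 0 := le_max_left _ _
      linarith
    · -- decreasing bounded above: f x ∈ [f 0, b] for x ≤ 0
      obtain ⟨C, hC⟩ := key (f 0) b
      have : ∀ x : ℝ, x ≤ 0 → -C ≤ x := by
        intro x hx
        have h1 : f x ∈ Set.Icc (f 0) b := ⟨hm.antitone hx, (h x).le⟩
        have := hC (f x) h1
        rw [hgf x] at this
        exact (abs_le.mp this).1
      have := this (min (-C) 0 - 1) (by
        have := min_le_right (-C) (0:ℝ); linarith)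
      have h2 : min (-C) 0 ≤ -C := min_le_left _ _
      linarith
  -- range of f is unbounded below
  have hlb : ∀ b : ℝ, ∃ x, f x ≤ b := by
    intro b
    by_contra h
    push_neg at h
    rcases hcont.strictMono_of_inj hinj with hm | hm
    · obtain ⟨C, hC⟩ := key b (f 0)
      have : ∀ x : ℝ, x ≤ 0 → -C ≤ x := by
        intro x hx
        have h1 : f x ∈ Set.Icc b (f 0) := ⟨(h x).le, hm.monotone hx⟩
        have := hC (f x) h1
        rw [hgf x] at this
        exact (abs_le.mp this).1
      have := this (min (-C) 0 - 1) (by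
        have := min_le_right (-C) (0:ℝ); linarith)
      have h2 : min (-C) 0 ≤ -C := min_le_left _ _
      linarith
    · obtain ⟨C, hC⟩ := key b (f 0)
      have : ∀ x : ℝ, 0 ≤ x → x ≤ C := by
        intro x hx
        have h1 : f x ∈ Set.Icc b (f 0) := ⟨(h x).le, hm.antitone hx⟩
        have := hC (f x) h1
        rw [hgf x] at this
        exact (abs_le.mp this).2
      have := this (max C 0 + 1) (by positivity)
      have h2 : C ≤ max C 0 := le_max_left _ _
      linarith
  -- now surjectivity via monotonicity
  rcases hcont.strictMono_of_inj hinj with hm | hm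
  · exact hcont.surjective
      (Filter.tendsto_atTop_atTop_of_monotone hm.monotone hub)
      (Filter.tendsto_atBot_atBot_of_monotone hm.monotone hlb)
  · refine hcont.surjective' ?_ ?_
    · refine Filter.tendsto_atTop.2 fun b => Filter.eventually_atBot.2 ?_
      obtain ⟨x₀, hb⟩ := hub b
      exact ⟨x₀, fun x hx => hb.trans (hm.antitone hx)⟩
    · refine Filter.tendsto_atBot.2 fun b => Filter.eventually_atTop.2 ?_
      obtain ⟨x₀, hb⟩ := hlb b
      exact ⟨x₀, fun x hx => (hm.antitone hx).trans hb⟩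
end
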